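/- arXiv:2306.03800 — 6 statements merged into one kernel-verified Lean document; each statement's English description precedes it below -/
import Mathlib

section
/- Let d ≥ 2 be an integer and let μ : [0,∞) → [0,∞) be continuously differentiable with |μ(e)| + |μ'(e)| ≤ C(1+e)^{-n₁} for some n₁ > (d+1)/2. Define φ(u) := ∫_{ℝ^{d-1}} μ(u² + |w|²) dw and Υ := sup{ |p| : p ∈ ℝ^d, μ(|p|²) ≠ 0 }. If d ≥ 3, or if d = 2 and μ'(e) ≤ 0 for all e ≥ 0, then: (i) φ is even on ℝ; (ii) φ'(u) ≤ 0 for all u ≥ 0; (iii) if moreover μ(|p|²) > 0 for all |p| < Υ, then φ'(u) < 0 for 0 < u < Υ; and (iv) there is a constant C' with |φ'(u)| ≤ C'|u| for all u ∈ ℝ. -/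
open MeasureTheory ENNReal

/-- The marginal of `μ(|p|²)` over a hyperplane in `ℝ^d`:
`φ(u) = ∫_{ℝ^{d-1}} μ(u² + |w|²) dw`. -/
noncomputable def phiMarg (d : ℕ) (μ : ℝ → ℝ) (u : ℝ) : ℝ :=
  ∫ w : EuclideanSpace ℝ (Fin (d - 1)), μ (u ^ 2 + ‖w‖ ^ 2)

/-- The maximal particle speed `Υ = sup {|p| : μ(|p|²) ≠ 0}`, as an extended real. -/
noncomputable def maxSpeed (d : ℕ) (μ : ℝ → ℝ) : ℝ≥0∞ :=
  ⨆ (p : EuclideanSpace ℝ (Fin d)) (_ : μ (‖p‖ ^ 2) ≠ 0), ENNReal.ofReal ‖p‖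

/-!
Polar coordinates in `ℝ^{d-1}` followed by `t = r²` give
`φ(u) = K ∫₀^∞ t^α μ(u² + t) dt` with `α = (d - 3)/2` and `K > 0`, so `φ` is even and
`φ'(u) = 2Ku ∫₀^∞ t^α μ'(u² + t) dt`. The last integral is `-μ(u²)` for `d = 3` and, after an integration by parts,
`-α ∫₀^∞ t^(α-1) μ(u² + t) dt` for `d ≥ 4`; for `d = 2` and `μ' ≤ 0` it is at most
`T^(-1/2) (μ(u² + T) - μ(u²))` for every `T > 0`. In each case it is `≤ 0`, and `< 0` when
`μ(u²) > 0`. The decay of `μ'` bounds it uniformly in `u`, whence `|φ'(u)| ≤ C'|u|`.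
-/

open Set Real Filter Topology

def PolyDecay (f : ℝ → ℝ) (C n : ℝ) : Prop :=
  ∀ e : ℝ, 0 ≤ e → |f e| ≤ C * (1 + e) ^ (-n)

noncomputable def weylIntegral (β : ℝ) (f : ℝ → ℝ) (s : ℝ) : ℝ :=
  ∫ t in Ioi (0 : ℝ), t ^ β * f (s + t)

lemma integrableOn_rpow_mul_one_add_rpow_neg {β n : ℝ} (hβ : -1 < β) (hβn : β - n < -1) :
    IntegrableOn (fun t : ℝ => t ^ β * (1 + t) ^ (-n)) (Ioi 0) := by
  have hmeas : AEStronglyMeasurable (fun t : ℝ => t ^ β * (1 + t) ^ (-n)) volume := by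
    fun_prop
  rw [← Ioc_union_Ioi_eq_Ioi zero_le_one]
  refine IntegrableOn.union ?_ ?_
  · refine ((intervalIntegrable_iff_integrableOn_Ioc_of_le zero_le_one).mp
      (intervalIntegral.intervalIntegrable_rpow' hβ)).mono' hmeas.restrict ?_
    filter_upwards [ae_restrict_mem measurableSet_Ioc] with t ht
    have ht0 : 0 < t := ht.1
    rw [norm_of_nonneg (by positivity)]
    exact mul_le_of_le_one_right (by positivity) (rpow_le_one_of_one_le_of_nonpos (by linarith)
      (by linarith))
  · refine (integrableOn_Ioi_rpow_of_lt hβn one_pos).mono' hmeas.restrict ?_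
    filter_upwards [ae_restrict_mem measurableSet_Ioi] with t ht
    have ht0 : 0 < t := one_pos.trans ht
    rw [norm_of_nonneg (by positivity), sub_eq_add_neg, rpow_add ht0]
    exact mul_le_mul_of_nonneg_left (rpow_le_rpow_of_nonpos ht0 (by linarith) (by linarith))
      (by positivity)

namespace PolyDecay

variable {f : ℝ → ℝ} {C n : ℝ}

lemma const_nonneg (hf : PolyDecay f C n) : 0 ≤ C := by
  simpa using (abs_nonneg _).trans (hf 0 le_rfl)

lemma abs_comp_add_le (hf : PolyDecay f C n) (hn : 0 ≤ n) {s t : ℝ} (hs : 0 ≤ s)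
    (ht : 0 ≤ t) :
    |f (s + t)| ≤ C * (1 + t) ^ (-n) :=
  (hf _ (add_nonneg hs ht)).trans <| mul_le_mul_of_nonneg_left
    (rpow_le_rpow_of_nonpos (by linarith) (by linarith) (by linarith)) hf.const_nonneg

lemma norm_rpow_mul_le (hf : PolyDecay f C n) (hn : 0 ≤ n) (β : ℝ) {s t : ℝ} (hs : 0 ≤ s)
    (ht : 0 < t) : ‖t ^ β * f (s + t)‖ ≤ C * (t ^ β * (1 + t) ^ (-n)) := by
  rw [norm_mul, norm_of_nonneg (by positivity), mul_left_comm]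
  exact mul_le_mul_of_nonneg_left (hf.abs_comp_add_le hn hs ht.le) (by positivity)

lemma tendsto_rpow_mul_atTop (hf : PolyDecay f C n) {γ s : ℝ} (hn : 0 ≤ n) (hγ : γ < n)
    (hs : 0 ≤ s) : Tendsto (fun t : ℝ => t ^ γ * f (s + t)) atTop (𝓝 0) := by
  have hlim : Tendsto (fun t : ℝ => C * t ^ (γ - n)) atTop (𝓝 0) := by
    simpa using (tendsto_rpow_neg_atTop (by linarith : 0 < n - γ)).const_mul C
  refine squeeze_zero_norm' ?_ hlim
  filter_upwards [eventually_gt_atTop 0] with t ht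
  calc ‖t ^ γ * f (s + t)‖ ≤ C * (t ^ γ * (1 + t) ^ (-n)) :=
        hf.norm_rpow_mul_le hn γ hs ht
    _ ≤ C * (t ^ γ * t ^ (-n)) := by
        gcongr ?_ * (?_ * ?_)
        · exact hf.const_nonneg
        · exact rpow_le_rpow_of_nonpos ht (by linarith) (by linarith)
    _ = C * t ^ (γ - n) := by rw [← rpow_add ht, sub_eq_add_neg]

end PolyDecay

section WeylIntegral

variable {f μ : ℝ → ℝ} {β C n s : ℝ}

lemma PolyDecay.integrableOn_rpow_mul (hf : PolyDecay f C n) (hfm : Measurable f)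
    (hβ : -1 < β) (hβn : β - n < -1) (hs : 0 ≤ s) :
    IntegrableOn (fun t : ℝ => t ^ β * f (s + t)) (Ioi 0) := by
  refine ((integrableOn_rpow_mul_one_add_rpow_neg hβ hβn).const_mul C).mono' (by fun_prop) ?_
  filter_upwards [ae_restrict_mem measurableSet_Ioi] with t ht
  exact hf.norm_rpow_mul_le (by linarith) β hs ht

lemma PolyDecay.abs_weylIntegral_le (hf : PolyDecay f C n) (hβ : -1 < β) (hβn : β - n < -1)
    (hs : 0 ≤ s) :
    |weylIntegral β f s| ≤ C * ∫ t in Ioi (0 : ℝ), t ^ β * (1 + t) ^ (-n) := by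
  rw [← norm_eq_abs, ← integral_const_mul]
  refine norm_integral_le_of_norm_le
    ((integrableOn_rpow_mul_one_add_rpow_neg hβ hβn).const_mul C) ?_
  filter_upwards [ae_restrict_mem measurableSet_Ioi] with t ht
  exact hf.norm_rpow_mul_le (by linarith) β hs ht

lemma PolyDecay.tendsto_comp_const_add (hf : PolyDecay f C n) (hn : 0 < n) (hs : 0 ≤ s) :
    Tendsto (fun t : ℝ => f (s + t)) atTop (𝓝 0) := by
  simpa using hf.tendsto_rpow_mul_atTop hn.le hn hs (γ := 0)

lemma ContDiff.hasDerivAt_comp_const_add (hμ : ContDiff ℝ 1 μ) (s x : ℝ) :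
    HasDerivAt (fun t : ℝ => μ (s + t)) (deriv μ (s + x)) x :=
  (hμ.differentiable one_ne_zero _).hasDerivAt.comp_const_add s x

lemma hasDerivAt_weylIntegral (hμ : ContDiff ℝ 1 μ) (h0 : PolyDecay μ C n)
    (h1 : PolyDecay (deriv μ) C n) (hβ : -1 < β) (hβn : β - n < -1) (hs : 0 < s) :
    HasDerivAt (weylIntegral β μ) (weylIntegral β (deriv μ) s) s := by
  refine (hasDerivAt_integral_of_dominated_loc_of_deriv_le
    (F := fun x t : ℝ => t ^ β * μ (x + t)) (F' := fun x t : ℝ => t ^ β * deriv μ (x + t))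
    (Ioi_mem_nhds hs)
    (.of_forall fun x => by fun_prop)
    (h0.integrableOn_rpow_mul hμ.continuous.measurable hβ hβn hs.le) (by fun_prop) ?_
    ((integrableOn_rpow_mul_one_add_rpow_neg hβ hβn).const_mul C) ?_).2
  · filter_upwards [ae_restrict_mem measurableSet_Ioi] with t ht x hx
    exact h1.norm_rpow_mul_le (by linarith) β (le_of_lt hx) ht
  · filter_upwards with t x _
    exact ((hμ.differentiable one_ne_zero _).hasDerivAt.comp_add_const x t).const_mul _

lemma weylIntegral_zero_deriv (hμ : ContDiff ℝ 1 μ) (h0 : PolyDecay μ C n)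
    (h1 : PolyDecay (deriv μ) C n) (hn : 1 < n) (hs : 0 ≤ s) :
    weylIntegral 0 (deriv μ) s = -μ s := by
  have hint := h1.integrableOn_rpow_mul (hμ.continuous_deriv le_rfl).measurable
    (by norm_num) (by linarith) hs (β := 0)
  simp only [Real.rpow_zero, one_mul] at hint
  simpa [weylIntegral] using integral_Ioi_of_hasDerivAt_of_tendsto'
    (fun x _ => hμ.hasDerivAt_comp_const_add s x) hint
    (h0.tendsto_comp_const_add (by linarith) hs)

lemma weylIntegral_deriv (hμ : ContDiff ℝ 1 μ) (h0 : PolyDecay μ C n)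
    (h1 : PolyDecay (deriv μ) C n) (hβ : 0 < β) (hβn : β - n < -1) (hs : 0 ≤ s) :
    weylIntegral β (deriv μ) s = -β * weylIntegral (β - 1) μ s := by
  have hint₀ := (h0.integrableOn_rpow_mul hμ.continuous.measurable (β := β - 1) (by linarith)
    (by linarith) hs).const_mul β
  have hint₁ := h1.integrableOn_rpow_mul (hμ.continuous_deriv le_rfl).measurable
    (by linarith) hβn hs
  have hcont : ContinuousWithinAt (fun t : ℝ => t ^ β * μ (s + t)) (Ici 0) 0 :=
    ((continuousAt_rpow_const 0 β (Or.inr hβ.le)).mul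
      (hμ.continuous.comp (continuous_const_add s)).continuousAt).continuousWithinAt
  have hderiv : ∀ x ∈ Ioi (0 : ℝ), HasDerivAt (fun t : ℝ => t ^ β * μ (s + t))
      (β * (x ^ (β - 1) * μ (s + x)) + x ^ β * deriv μ (s + x)) x := fun x hx =>
    ((hasDerivAt_rpow_const (Or.inl hx.ne')).mul
      (hμ.hasDerivAt_comp_const_add s x)).congr_deriv (by ring)
  have key := integral_Ioi_of_hasDerivAt_of_tendsto hcont hderiv (hint₀.add hint₁)
    (h0.tendsto_rpow_mul_atTop (by linarith) (by linarith) hs)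
  rw [integral_add hint₀ hint₁, integral_const_mul, zero_rpow hβ.ne', zero_mul,
    sub_zero] at key
  simp only [weylIntegral]
  linarith

lemma weylIntegral_nonneg (hf : ∀ e, 0 ≤ e → 0 ≤ f e) (hs : 0 ≤ s) :
    0 ≤ weylIntegral β f s :=
  setIntegral_nonneg measurableSet_Ioi fun t ht =>
    mul_nonneg (rpow_nonneg (le_of_lt ht) _) (hf _ (by linarith [mem_Ioi.mp ht]))

lemma weylIntegral_nonpos (hf : ∀ e, 0 ≤ e → f e ≤ 0) (hs : 0 ≤ s) :
    weylIntegral β f s ≤ 0 :=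
  setIntegral_nonpos measurableSet_Ioi fun t ht =>
    mul_nonpos_of_nonneg_of_nonpos (rpow_nonneg (le_of_lt ht) _)
      (hf _ (by linarith [mem_Ioi.mp ht]))

lemma weylIntegral_pos (hf : Continuous f) (hf0 : ∀ e, 0 ≤ e → 0 ≤ f e)
    (hint : IntegrableOn (fun t : ℝ => t ^ β * f (s + t)) (Ioi 0)) (hs : 0 ≤ s)
    (hfs : 0 < f s) : 0 < weylIntegral β f s := by
  obtain ⟨ε, hε, hball⟩ :=
    Metric.eventually_nhds_iff.mp ((hf.tendsto s).eventually (eventually_gt_nhds hfs))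
  have hsupp : Ioo 0 ε ⊆ Function.support (fun t : ℝ => t ^ β * f (s + t)) ∩ Ioi 0 :=
    fun t ht => ⟨(mul_pos (rpow_pos_of_pos ht.1 β) (hball (by
      rw [dist_eq, add_sub_cancel_left, abs_of_pos ht.1]; exact ht.2))).ne', ht.1⟩
  rw [weylIntegral, setIntegral_pos_iff_support_of_nonneg_ae _ hint]
  · exact ((Measure.measure_Ioo_pos volume).mpr hε).trans_le (measure_mono hsupp)
  · filter_upwards [ae_restrict_mem measurableSet_Ioi] with t ht
    exact mul_nonneg (rpow_nonneg (le_of_lt ht) _) (hf0 _ (by linarith [mem_Ioi.mp ht]))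

lemma weylIntegral_deriv_neg_of_deriv_nonpos (hμ : ContDiff ℝ 1 μ) (h0 : PolyDecay μ C n)
    (h1 : PolyDecay (deriv μ) C n) (hβ : -1 < β) (hβ0 : β ≤ 0) (hβn : β - n < -1)
    (hμ' : ∀ e, 0 ≤ e → deriv μ e ≤ 0) (hs : 0 ≤ s) (hμs : 0 < μ s) :
    weylIntegral β (deriv μ) s < 0 := by
  obtain ⟨T, hT, hT0⟩ := (((h0.tendsto_comp_const_add (by linarith) hs).eventually
    (gt_mem_nhds hμs)).and (eventually_gt_atTop 0)).exists
  have hμ'c : Continuous fun t => deriv μ (s + t) :=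
    (hμ.continuous_deriv le_rfl).comp (continuous_const_add s)
  have hint := h1.integrableOn_rpow_mul (hμ.continuous_deriv le_rfl).measurable hβ hβn hs
  calc weylIntegral β (deriv μ) s ≤ ∫ t in Ioc 0 T, t ^ β * deriv μ (s + t) := by
        have := setIntegral_mono_set (s := Ioc 0 T) hint.neg ?_ Ioc_subset_Ioi_self.eventuallyLE
        · simp only [Pi.neg_apply, integral_neg, neg_le_neg_iff] at this
          exact this
        · filter_upwards [ae_restrict_mem measurableSet_Ioi] with t ht
          exact neg_nonneg.mpr (mul_nonpos_of_nonneg_of_nonpos (rpow_nonneg (le_of_lt ht) _)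
            (hμ' _ (by linarith [mem_Ioi.mp ht])))
    _ ≤ ∫ t in Ioc 0 T, T ^ β * deriv μ (s + t) :=
        setIntegral_mono_on (hint.mono_set Ioc_subset_Ioi_self)
          (hμ'c.integrableOn_Ioc.const_mul _) measurableSet_Ioc fun t ht =>
          mul_le_mul_of_nonpos_right (rpow_le_rpow_of_nonpos ht.1 ht.2 hβ0)
            (hμ' _ (by linarith [ht.1]))
    _ = T ^ β * (μ (s + T) - μ s) := by
        rw [integral_const_mul, ← intervalIntegral.integral_of_le hT0.le,
          intervalIntegral.integral_eq_sub_of_hasDerivAt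
            (fun x _ => hμ.hasDerivAt_comp_const_add s x) (hμ'c.intervalIntegrable _ _),
          add_zero]
    _ < 0 := mul_neg_of_pos_of_neg (rpow_pos_of_pos hT0 β) (by linarith)

lemma weylIntegral_deriv_nonpos_of_nonneg (hμ : ContDiff ℝ 1 μ) (h0 : PolyDecay μ C n)
    (h1 : PolyDecay (deriv μ) C n) (hμ0 : ∀ e, 0 ≤ e → 0 ≤ μ e) (hβ : 0 ≤ β)
    (hβn : β - n < -1) (hs : 0 ≤ s) : weylIntegral β (deriv μ) s ≤ 0 := by
  rcases hβ.eq_or_lt with rfl | hβ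
  · rw [weylIntegral_zero_deriv hμ h0 h1 (by linarith) hs]
    exact neg_nonpos.mpr (hμ0 s hs)
  · rw [weylIntegral_deriv hμ h0 h1 hβ hβn hs, neg_mul]
    exact neg_nonpos.mpr (mul_nonneg hβ.le (weylIntegral_nonneg hμ0 hs))

lemma weylIntegral_deriv_neg_of_nonneg (hμ : ContDiff ℝ 1 μ) (h0 : PolyDecay μ C n)
    (h1 : PolyDecay (deriv μ) C n) (hμ0 : ∀ e, 0 ≤ e → 0 ≤ μ e) (hβ : 0 ≤ β)
    (hβn : β - n < -1) (hs : 0 ≤ s) (hμs : 0 < μ s) : weylIntegral β (deriv μ) s < 0 := by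
  rcases hβ.eq_or_lt with rfl | hβ
  · rw [weylIntegral_zero_deriv hμ h0 h1 (by linarith) hs]
    exact neg_neg_of_pos hμs
  · rw [weylIntegral_deriv hμ h0 h1 hβ hβn hs, neg_mul]
    exact neg_neg_of_pos (mul_pos hβ (weylIntegral_pos hμ.continuous hμ0
      (h0.integrableOn_rpow_mul hμ.continuous.measurable (by linarith) (by linarith) hs) hs hμs))

lemma weylIntegral_deriv_sign {d : ℕ} (hμ : ContDiff ℝ 1 μ) (h0 : PolyDecay μ C n)
    (h1 : PolyDecay (deriv μ) C n) (hμ0 : ∀ e, 0 ≤ e → 0 ≤ μ e)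
    (hn : ((d : ℝ) - 3) / 2 - n < -1)
    (hcase : 3 ≤ d ∨ (d = 2 ∧ ∀ e : ℝ, 0 ≤ e → deriv μ e ≤ 0)) (hs : 0 ≤ s) :
    weylIntegral (((d : ℝ) - 3) / 2) (deriv μ) s ≤ 0 ∧
      (0 < μ s → weylIntegral (((d : ℝ) - 3) / 2) (deriv μ) s < 0) := by
  rcases hcase with h3 | ⟨h2, hμ'⟩
  · have hβ : 0 ≤ ((d : ℝ) - 3) / 2 := by
      have : (3 : ℝ) ≤ d := by exact_mod_cast h3
      linarith
    exact ⟨weylIntegral_deriv_nonpos_of_nonneg hμ h0 h1 hμ0 hβ hn hs,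
      weylIntegral_deriv_neg_of_nonneg hμ h0 h1 hμ0 hβ hn hs⟩
  · have hβ : ((d : ℝ) - 3) / 2 = -1 / 2 := by rw [h2]; norm_num
    exact ⟨weylIntegral_nonpos hμ' hs, weylIntegral_deriv_neg_of_deriv_nonpos hμ h0 h1
      (by linarith) (by linarith) hn hμ' hs⟩

end WeylIntegral

lemma integral_Ioi_pow_mul_comp_sq (k : ℕ) (g : ℝ → ℝ) :
    ∫ y in Ioi (0 : ℝ), y ^ k * g (y ^ 2) =
      (∫ t in Ioi (0 : ℝ), t ^ (((k : ℝ) - 1) / 2) * g t) / 2 := by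
  rw [← integral_comp_rpow_Ioi_of_pos (g := fun t => t ^ (((k : ℝ) - 1) / 2) * g t) two_pos,
    _root_.eq_div_iff two_ne_zero, ← integral_mul_const]
  refine setIntegral_congr_fun measurableSet_Ioi fun y (hy : 0 < y) => ?_
  have hpow : (y ^ (2 : ℝ)) ^ (((k : ℝ) - 1) / 2) = y ^ ((k : ℝ) - 1) := by
    rw [← rpow_mul hy.le]; ring_nf
  have hk : y ^ ((2 : ℝ) - 1) * y ^ ((k : ℝ) - 1) = y ^ k := by
    rw [← rpow_add hy, ← Real.rpow_natCast]; ring_nf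
  rw [smul_eq_mul, hpow, Real.rpow_two, ← hk]
  ring

lemma exists_phiMarg_eq_mul_weylIntegral {d : ℕ} (hd : 2 ≤ d) :
    ∃ K > 0, ∀ μ : ℝ → ℝ,
      phiMarg d μ = fun u => K * weylIntegral (((d : ℝ) - 3) / 2) μ (u ^ 2) := by
  have : Nonempty (Fin (d - 1)) := ⟨⟨0, by omega⟩⟩
  have hV : 0 < volume.real (Metric.ball (0 : EuclideanSpace ℝ (Fin (d - 1))) 1) :=
    ENNReal.toReal_pos (Metric.measure_ball_pos _ _ one_pos).ne' measure_ball_lt_top.ne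
  have hd1 : (0 : ℝ) < (d - 1 : ℕ) := Nat.cast_pos.mpr (by omega)
  refine ⟨(d - 1 : ℕ) * volume.real (Metric.ball (0 : EuclideanSpace ℝ (Fin (d - 1))) 1) / 2,
    by positivity, fun μ => funext fun u => ?_⟩
  have hexp : (((d - 1 - 1 : ℕ) : ℝ) - 1) / 2 = ((d : ℝ) - 3) / 2 := by
    rw [Nat.cast_sub (by omega), Nat.cast_sub (by omega)]; ring
  rw [phiMarg, integral_fun_norm_addHaar volume (fun r => μ (u ^ 2 + r ^ 2)),
    finrank_euclideanSpace_fin, nsmul_eq_mul, smul_eq_mul]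
  simp only [smul_eq_mul]
  rw [integral_Ioi_pow_mul_comp_sq (d - 1 - 1) (fun t => μ (u ^ 2 + t)), hexp, weylIntegral]
  ring

lemma deriv_comp_sq {g g' : ℝ → ℝ} (hg : ∀ s, 0 < s → HasDerivAt g (g' s) s) (u : ℝ) :
    deriv (fun u : ℝ => g (u ^ 2)) u = g' (u ^ 2) * (2 * u) := by
  rcases eq_or_ne u 0 with rfl | hu
  · -- `u ↦ g (u ^ 2)` is even, so its derivative at `0` equals its own negative.
    have h := deriv_comp_neg (fun u : ℝ => g (u ^ 2)) (0 : ℝ)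
    simp only [neg_sq, neg_zero] at h
    simp only [mul_zero]
    linarith
  · exact ((hg _ (by positivity)).comp u (by simpa using hasDerivAt_pow 2 u)).deriv

theorem stmt0 (d : ℕ) (hd : 2 ≤ d) (μ : ℝ → ℝ) (C n₁ : ℝ)
    (hμ0 : ∀ e : ℝ, 0 ≤ e → 0 ≤ μ e)
    (hμC1 : ContDiff ℝ 1 μ)
    (hn₁ : ((d : ℝ) + 1) / 2 < n₁)
    (hdecay : ∀ e : ℝ, 0 ≤ e → |μ e| + |deriv μ e| ≤ C * (1 + e) ^ (-n₁))
    (hcase : 3 ≤ d ∨ (d = 2 ∧ ∀ e : ℝ, 0 ≤ e → deriv μ e ≤ 0)) :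
    (∀ u : ℝ, phiMarg d μ (-u) = phiMarg d μ u) ∧
    (∀ u : ℝ, 0 ≤ u → deriv (phiMarg d μ) u ≤ 0) ∧
    ((∀ p : EuclideanSpace ℝ (Fin d), ENNReal.ofReal ‖p‖ < maxSpeed d μ →
        0 < μ (‖p‖ ^ 2)) →
      ∀ u : ℝ, 0 < u → ENNReal.ofReal u < maxSpeed d μ →
        deriv (phiMarg d μ) u < 0) ∧
    (∃ C' : ℝ, ∀ u : ℝ, |deriv (phiMarg d μ) u| ≤ C' * |u|) := by
  obtain ⟨K, hK, hφ⟩ := exists_phiMarg_eq_mul_weylIntegral hd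
  set α : ℝ := ((d : ℝ) - 3) / 2 with hα
  have hd' : (2 : ℝ) ≤ d := by exact_mod_cast hd
  have hαn : α - n₁ < -1 := by linarith
  have h0 : PolyDecay μ C n₁ := fun e he => by linarith [hdecay e he, abs_nonneg (deriv μ e)]
  have h1 : PolyDecay (deriv μ) C n₁ := fun e he => by linarith [hdecay e he, abs_nonneg (μ e)]
  have hderiv (u : ℝ) :
      deriv (phiMarg d μ) u = K * (weylIntegral α (deriv μ) (u ^ 2) * (2 * u)) := by
    rw [hφ μ, deriv_const_mul_field, deriv_comp_sq fun s hs =>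
      hasDerivAt_weylIntegral hμC1 h0 h1 (by linarith) hαn hs]
  have hsign (u : ℝ) := weylIntegral_deriv_sign hμC1 h0 h1 hμ0 hαn hcase (sq_nonneg u)
  refine ⟨fun u => by simp [hφ], fun u hu => ?_, fun hpos u hu hΥ => ?_, ?_⟩
  · rw [hderiv]
    exact mul_nonpos_of_nonneg_of_nonpos hK.le
      (mul_nonpos_of_nonpos_of_nonneg (hsign u).1 (by linarith))
  · set p := EuclideanSpace.single (⟨0, by omega⟩ : Fin d) u
    have hp : ‖p‖ = u := by rw [PiLp.norm_single, norm_of_nonneg hu.le]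
    have hμu : 0 < μ (u ^ 2) := by simpa only [hp] using hpos p (by rwa [hp])
    rw [hderiv]
    exact mul_neg_of_pos_of_neg hK (mul_neg_of_neg_of_pos ((hsign u).2 hμu) (by linarith))
  · obtain ⟨B, hB⟩ : ∃ B, ∀ s, 0 ≤ s → |weylIntegral α (deriv μ) s| ≤ B :=
      ⟨_, fun s hs => h1.abs_weylIntegral_le (by linarith) hαn hs⟩
    refine ⟨2 * K * B, fun u => ?_⟩
    rw [hderiv, abs_mul, abs_mul, abs_mul, abs_of_pos hK, abs_two]
    calc K * (|weylIntegral α (deriv μ) (u ^ 2)| * (2 * |u|)) ≤ K * (B * (2 * |u|)) := by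
          gcongr; exact hB _ (sq_nonneg u)
      _ = 2 * K * B * |u| := by ring
end

section
/- Let N₀ ≥ 2 be an integer and let φ : ℝ → ℝ be of class C^{N₀} with |φ^{(j)}(u)| ≤ C(1+|u|)^{-N₀-2} for all u ∈ ℝ and all 0 ≤ j ≤ N₀. Define H(z) := ∫_ℝ φ(u)/(z − u) du for z ∈ ℂ with Im z < 0. Then H is holomorphic on the open lower half-plane and for every integer 0 ≤ n ≤ N₀ − 2 there is a constant C_n (depending only on C, N₀, n) such that |H^{(n)}(z)| ≤ C_n for all z with Im z < 0; in particular all these derivatives are bounded uniformly up to the real axis. -/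
/-!
Differentiating under the integral sign gives `H_ψ' = -∫ ψ(u)/(z-u)²`, and an integration by
parts turns this into `H_{ψ'}`; hence `H^{(n)} = H_{φ^{(n)}}`. A Cauchy integral `H_ψ` is bounded
off the real axis by `∫ |ψ| + 2 sup |ψ'| + 2π sup |ψ|`: for `|u - Re z| > 1` the kernel has
modulus `≤ 1`, and on `[Re z - 1, Re z + 1]` we subtract `ψ(Re z)`. The remaining quotient is
bounded by `sup |ψ'|`, while `∫ (z-u)⁻¹` is a difference of logarithms of two numbers of equal
modulus, hence purely imaginary of size `≤ 2π`.
-/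

open MeasureTheory

/-- The Cauchy integral `H(z) = ∫_ℝ φ(u)/(z − u) du`. -/
noncomputable def Hcauchy (φ : ℝ → ℝ) (z : ℂ) : ℂ :=
  ∫ u : ℝ, (φ u : ℂ) / (z - (u : ℂ))

open Complex Filter Metric Set Real Topology

section

variable {ψ : ℝ → ℝ} {z : ℂ} {M L : ℝ}

lemma abs_im_le_norm_sub_ofReal (z : ℂ) (u : ℝ) : |z.im| ≤ ‖z - u‖ := by
  simpa using abs_im_le_norm (z - u)

lemma abs_re_sub_le_norm_sub_ofReal (z : ℂ) (u : ℝ) : |z.re - u| ≤ ‖z - u‖ := by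
  simpa using abs_re_le_norm (z - u)

lemma sub_ofReal_ne_zero (hz : z.im ≠ 0) (u : ℝ) : z - u ≠ 0 := by
  rw [← norm_pos_iff]
  exact (abs_pos.2 hz).trans_le (abs_im_le_norm_sub_ofReal z u)

lemma norm_inv_sub_ofReal_pow_le (hz : z.im ≠ 0) (u : ℝ) (k : ℕ) :
    ‖((z - u) ^ k)⁻¹‖ ≤ (|z.im| ^ k)⁻¹ := by
  rw [norm_inv, norm_pow]
  exact inv_anti₀ (by positivity)
    (pow_le_pow_left₀ (abs_nonneg _) (abs_im_le_norm_sub_ofReal z u) k)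

lemma integrable_div_sub_ofReal_pow (hψ : Integrable ψ) (hz : z.im ≠ 0) (k : ℕ) :
    Integrable (fun u : ℝ => (ψ u : ℂ) / (z - u) ^ k) := by
  simp only [div_eq_mul_inv]
  refine hψ.ofReal.mul_bdd ?_ (Eventually.of_forall fun u => norm_inv_sub_ofReal_pow_le hz u k)
  exact (Continuous.inv₀ (by fun_prop) fun u =>
    pow_ne_zero k (sub_ofReal_ne_zero hz u)).aestronglyMeasurable

lemma hasDerivAt_Hcauchy_neg_integral (hψ : Integrable ψ) (hz : z.im ≠ 0) :
    HasDerivAt (Hcauchy ψ) (-∫ u : ℝ, (ψ u : ℂ) / (z - u) ^ 2) z := by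
  set ε := |z.im| / 2 with hε_def
  have hε : 0 < ε := by positivity
  have him_ball : ∀ w ∈ ball z ε, ε ≤ |w.im| := fun w hw => by
    have h := (abs_im_le_norm (w - z)).trans_lt (mem_ball_iff_norm.1 hw)
    rw [sub_im] at h
    linarith [abs_sub_abs_le_abs_sub z.im w.im, abs_sub_comm z.im w.im]
  have hne : ∀ w ∈ ball z ε, w.im ≠ 0 := fun w hw =>
    abs_pos.1 (hε.trans_le (him_ball w hw))
  rw [← integral_neg]
  refine (hasDerivAt_integral_of_dominated_loc_of_deriv_le
    (F := fun w (u : ℝ) => (ψ u : ℂ) / (w - u))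
    (F' := fun w (u : ℝ) => -((ψ u : ℂ) / (w - u) ^ 2))
    (bound := fun u => (ε ^ 2)⁻¹ * |ψ u|) (ball_mem_nhds z hε) ?_
    (by simpa using integrable_div_sub_ofReal_pow hψ hz 1)
    (integrable_div_sub_ofReal_pow hψ hz 2).neg.aestronglyMeasurable ?_
    (hψ.abs.const_mul _) ?_).2
  · filter_upwards [ball_mem_nhds z hε] with w hw
    simpa using (integrable_div_sub_ofReal_pow hψ (hne w hw) 1).aestronglyMeasurable
  · refine Eventually.of_forall fun u w hw => ?_
    rw [norm_neg, norm_div, norm_real, Real.norm_eq_abs, div_eq_inv_mul, norm_pow]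
    gcongr
    exact (him_ball w hw).trans (abs_im_le_norm_sub_ofReal w u)
  · refine Eventually.of_forall fun u w hw => ?_
    have := (((hasDerivAt_id w).sub_const (u : ℂ)).fun_inv
      (sub_ofReal_ne_zero (hne w hw) u)).const_mul (ψ u : ℂ)
    simpa only [div_eq_mul_inv, id, one_div, one_mul, mul_neg, neg_mul] using this

lemma integral_div_sub_ofReal_sq (hψ : Differentiable ℝ ψ) (hψi : Integrable ψ)
    (hψ'i : Integrable (deriv ψ)) (hz : z.im ≠ 0) :
    ∫ u : ℝ, (ψ u : ℂ) / (z - u) ^ 2 = -Hcauchy (deriv ψ) z := by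
  have hv : ∀ t : ℝ, HasDerivAt (fun t : ℝ => (z - t)⁻¹) ((z - t) ^ 2)⁻¹ t := fun t => by
    have := (((hasDerivAt_id (t : ℂ)).const_sub z).inv (sub_ofReal_ne_zero hz t)).comp_ofReal
    simpa using this
  have := integral_mul_deriv_eq_deriv_mul_of_integrable
    (u := fun t => (ψ t : ℂ)) (u' := fun t => ((deriv ψ t : ℝ) : ℂ))
    (fun t _ => (hψ t).hasDerivAt.ofReal_comp) (fun t _ => hv t)
    (by simpa [Pi.mul_def, div_eq_mul_inv] using integrable_div_sub_ofReal_pow hψi hz 2)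
    (by simpa [Pi.mul_def, div_eq_mul_inv] using integrable_div_sub_ofReal_pow hψ'i hz 1)
    (by simpa [Pi.mul_def, div_eq_mul_inv] using integrable_div_sub_ofReal_pow hψi hz 1)
  simpa [Hcauchy, div_eq_mul_inv] using this

lemma hasDerivAt_Hcauchy (hψ : Differentiable ℝ ψ) (hψi : Integrable ψ)
    (hψ'i : Integrable (deriv ψ)) (hz : z.im ≠ 0) :
    HasDerivAt (Hcauchy ψ) (Hcauchy (deriv ψ) z) z := by
  simpa [integral_div_sub_ofReal_sq hψ hψi hψ'i hz] using hasDerivAt_Hcauchy_neg_integral hψi hz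

lemma Complex.norm_log_sub_log_le {a b : ℂ} (h : ‖a‖ = ‖b‖) : ‖log a - log b‖ ≤ 2 * π := by
  have : log a - log b = (arg a - arg b : ℝ) * I := by
    simp only [log, h]; push_cast; ring
  rw [this, norm_mul, norm_I, mul_one, norm_real, Real.norm_eq_abs]
  linarith [abs_sub (arg a) (arg b), abs_arg_le_pi a, abs_arg_le_pi b]

lemma hasDerivAt_neg_log_sub_ofReal (hz : z.im ≠ 0) (t : ℝ) :
    HasDerivAt (fun u : ℝ => -log (z - u)) (z - t)⁻¹ t := by
  have hslit : z - t ∈ slitPlane := mem_slitPlane_iff.2 (Or.inr (by simpa using hz))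
  have := (((hasDerivAt_id (t : ℂ)).const_sub z).clog hslit).comp_ofReal.fun_neg
  simpa [neg_div, one_div] using this

lemma norm_integral_inv_sub_ofReal_le (hz : z.im ≠ 0) :
    ‖∫ u in z.re - 1..z.re + 1, (z - u)⁻¹‖ ≤ 2 * π := by
  rw [intervalIntegral.integral_eq_sub_of_hasDerivAt
    (fun t _ => hasDerivAt_neg_log_sub_ofReal hz t)
    ((Continuous.inv₀ (by fun_prop) fun u => sub_ofReal_ne_zero hz u).intervalIntegrable _ _),
    neg_sub_neg]
  refine norm_log_sub_log_le ?_
  simp only [norm_def, normSq_apply, sub_re, sub_im, ofReal_re, ofReal_im]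
  ring_nf

lemma norm_integral_div_sub_ofReal_near_le (hψ : Differentiable ℝ ψ) (hM : ∀ u, |ψ u| ≤ M)
    (hL : ∀ u, |deriv ψ u| ≤ L) (hz : z.im ≠ 0) :
    ‖∫ u in z.re - 1..z.re + 1, (ψ u : ℂ) / (z - u)‖ ≤ 2 * L + 2 * π * M := by
  set x := z.re
  have hinv : Continuous fun u : ℝ => (z - u)⁻¹ :=
    Continuous.inv₀ (by fun_prop) fun u => sub_ofReal_ne_zero hz u
  have hlip : ∀ u, |ψ u - ψ x| ≤ L * |u - x| := fun u => by
    simpa [Real.norm_eq_abs] using convex_univ.norm_image_sub_le_of_norm_deriv_le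
      (fun t _ => hψ t) (fun t _ => hL t) (mem_univ x) (mem_univ u)
  have hsplit : ∫ u in x - 1..x + 1, (ψ u : ℂ) / (z - u) =
      (∫ u in x - 1..x + 1, ((ψ u - ψ x : ℝ) : ℂ) * (z - u)⁻¹) +
        (ψ x : ℂ) * ∫ u in x - 1..x + 1, (z - u)⁻¹ := by
    have hdiff_int : IntervalIntegrable (fun u : ℝ => ((ψ u - ψ x : ℝ) : ℂ) * (z - u)⁻¹)
        volume (x - 1) (x + 1) :=
      ((continuous_ofReal.comp (hψ.continuous.sub continuous_const)).mul
        hinv).intervalIntegrable _ _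
    have hconst_int : IntervalIntegrable (fun u : ℝ => (ψ x : ℂ) * (z - u)⁻¹)
        volume (x - 1) (x + 1) :=
      (continuous_const.mul hinv).intervalIntegrable _ _
    rw [← intervalIntegral.integral_const_mul,
      ← intervalIntegral.integral_add hdiff_int hconst_int]
    congr 1 with u
    push_cast
    ring
  have hdiff :
      ‖∫ u in x - 1..x + 1, ((ψ u - ψ x : ℝ) : ℂ) * (z - u)⁻¹‖ ≤ L * |x + 1 - (x - 1)| := by
    refine intervalIntegral.norm_integral_le_of_norm_le_const fun u _ => ?_
    rw [norm_mul, norm_real, Real.norm_eq_abs, norm_inv,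
      ← div_eq_mul_inv, div_le_iff₀ (norm_pos_iff.2 (sub_ofReal_ne_zero hz u))]
    calc |ψ u - ψ x| ≤ L * |u - x| := hlip u
      _ ≤ L * ‖z - u‖ := by
        rw [abs_sub_comm]
        exact mul_le_mul_of_nonneg_left (abs_re_sub_le_norm_sub_ofReal z u)
          ((abs_nonneg _).trans (hL u))
  have hconst : ‖(ψ x : ℂ) * ∫ u in x - 1..x + 1, (z - u)⁻¹‖ ≤ M * (2 * π) := by
    rw [norm_mul, norm_real, Real.norm_eq_abs]
    exact mul_le_mul (hM x) (norm_integral_inv_sub_ofReal_le hz) (norm_nonneg _)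
      ((abs_nonneg _).trans (hM x))
  rw [hsplit]
  refine (norm_add_le _ _).trans ?_
  have hlen : |x + 1 - (x - 1)| = 2 := by norm_num [abs_of_pos]
  rw [hlen] at hdiff
  linarith

lemma norm_setIntegral_div_sub_ofReal_far_le (hψ : Integrable ψ) :
    ‖∫ u in (Ioc (z.re - 1) (z.re + 1))ᶜ, (ψ u : ℂ) / (z - u)‖ ≤ ∫ u, |ψ u| := by
  refine (norm_integral_le_of_norm_le hψ.abs.integrableOn ?_).trans
    (setIntegral_le_integral hψ.abs (Eventually.of_forall fun u => abs_nonneg _))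
  refine (ae_restrict_iff' measurableSet_Ioc.compl).2 (Eventually.of_forall fun u hu => ?_)
  have hfar : 1 ≤ ‖z - u‖ := by
    refine le_trans ?_ (abs_re_sub_le_norm_sub_ofReal z u)
    simp only [mem_compl_iff, mem_Ioc, not_and_or, not_lt, not_le] at hu
    rcases hu with h | h
    · rw [abs_of_nonneg (by linarith)]; linarith
    · rw [abs_of_nonpos (by linarith)]; linarith
  rw [norm_div, norm_real, Real.norm_eq_abs]
  exact div_le_self (abs_nonneg _) hfar

lemma norm_Hcauchy_le (hψ : Differentiable ℝ ψ) (hψi : Integrable ψ) (hM : ∀ u, |ψ u| ≤ M)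
    (hL : ∀ u, |deriv ψ u| ≤ L) (hz : z.im ≠ 0) :
    ‖Hcauchy ψ z‖ ≤ 2 * L + 2 * π * M + ∫ u, |ψ u| := by
  have hnear := norm_integral_div_sub_ofReal_near_le hψ hM hL hz
  rw [intervalIntegral.integral_of_le (by linarith)] at hnear
  rw [Hcauchy, ← integral_add_compl (measurableSet_Ioc (a := z.re - 1) (b := z.re + 1))
    (by simpa using integrable_div_sub_ofReal_pow hψi hz 1)]
  have hfar := norm_setIntegral_div_sub_ofReal_far_le (z := z) hψi
  exact (norm_add_le _ _).trans (add_le_add hnear hfar)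

end

section

variable {φ : ℝ → ℝ}

lemma integrable_one_add_abs_rpow_neg {r : ℝ} (hr : 1 < r) :
    Integrable fun u : ℝ => (1 + |u|) ^ (-r) := by
  simpa using integrable_one_add_norm (E := ℝ) (μ := volume) (r := r) (by simpa using hr)

lemma integrable_of_abs_le_mul_one_add_abs_rpow_neg {r C : ℝ} (hr : 1 < r) (hφ : Continuous φ)
    (h : ∀ u, |φ u| ≤ C * (1 + |u|) ^ (-r)) : Integrable φ :=
  ((integrable_one_add_abs_rpow_neg hr).const_mul C).mono' hφ.aestronglyMeasurable
    (Eventually.of_forall h)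

lemma abs_le_of_abs_le_mul_one_add_abs_rpow_neg {r C : ℝ} (hr : 0 ≤ r)
    (h : ∀ u, |φ u| ≤ C * (1 + |u|) ^ (-r)) (u : ℝ) : |φ u| ≤ C := by
  have hw : ∀ u : ℝ, (1 + |u|) ^ (-r) ≤ 1 := fun u =>
    rpow_le_one_of_one_le_of_nonpos (by linarith [abs_nonneg u]) (by linarith)
  have hC : 0 ≤ C := nonneg_of_mul_nonneg_left ((abs_nonneg _).trans (h 0)) (by positivity)
  exact (h u).trans (mul_le_of_le_one_right hC (hw u))

lemma iteratedDeriv_Hcauchy_eqOn {N : ℕ} (hφ : ContDiff ℝ N φ)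
    (hint : ∀ j ≤ N, Integrable (iteratedDeriv j φ)) {n : ℕ} (hn : n ≤ N) :
    EqOn (iteratedDeriv n (Hcauchy φ)) (Hcauchy (iteratedDeriv n φ)) {z | z.im ≠ 0} := by
  induction n with
  | zero => simp [EqOn]
  | succ k ih =>
    intro z hz
    have hev : iteratedDeriv k (Hcauchy φ) =ᶠ[𝓝 z] Hcauchy (iteratedDeriv k φ) :=
      Filter.eventuallyEq_of_mem ((isOpen_ne_fun continuous_im continuous_const).mem_nhds hz)
        (ih (by omega))
    have hderiv := hasDerivAt_Hcauchy (hφ.differentiable_iteratedDeriv k (by exact_mod_cast hn))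
      (hint k (by omega)) (by simpa [← iteratedDeriv_succ] using hint (k + 1) hn) hz
    rw [iteratedDeriv_succ, hev.deriv_eq, hderiv.deriv, ← iteratedDeriv_succ]

end

theorem stmt1 (N₀ : ℕ) (hN₀ : 2 ≤ N₀) (φ : ℝ → ℝ) (C : ℝ)
    (hreg : ContDiff ℝ N₀ φ)
    (hdecay : ∀ j : ℕ, j ≤ N₀ → ∀ u : ℝ,
      |iteratedDeriv j φ u| ≤ C * (1 + |u|) ^ (-(N₀ : ℝ) - 2)) :
    DifferentiableOn ℂ (Hcauchy φ) {z : ℂ | z.im < 0} ∧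
    ∀ n : ℕ, n ≤ N₀ - 2 → ∃ Cn : ℝ, ∀ z : ℂ, z.im < 0 →
      ‖iteratedDeriv n (Hcauchy φ) z‖ ≤ Cn := by
  simp only [neg_sub_left] at hdecay
  have hr : 1 < (2 + N₀ : ℝ) := by linarith [(Nat.cast_nonneg N₀ : (0 : ℝ) ≤ N₀)]
  have hint : ∀ j ≤ N₀, Integrable (iteratedDeriv j φ) := fun j hj =>
    integrable_of_abs_le_mul_one_add_abs_rpow_neg hr
      (hreg.continuous_iteratedDeriv j (by exact_mod_cast hj)) (hdecay j hj)
  have hbdd : ∀ j ≤ N₀, ∀ u, |iteratedDeriv j φ u| ≤ C := fun j hj =>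
    abs_le_of_abs_le_mul_one_add_abs_rpow_neg (by linarith) (hdecay j hj)
  refine ⟨fun z hz => (hasDerivAt_Hcauchy_neg_integral (hint 0 (Nat.zero_le _))
    hz.ne).differentiableAt.differentiableWithinAt, fun n hn => ?_⟩
  refine ⟨2 * C + 2 * π * C + ∫ u, C * (1 + |u|) ^ (-(2 + N₀ : ℝ)), fun z hz => ?_⟩
  have hn1 : n + 1 ≤ N₀ := by omega
  have hn0 : n ≤ N₀ := by omega
  rw [iteratedDeriv_Hcauchy_eqOn hreg hint hn0 hz.ne]
  refine (norm_Hcauchy_le (hreg.differentiable_iteratedDeriv n (by exact_mod_cast hn1))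
    (hint n hn0) (hbdd n hn0)
    (by simpa [← iteratedDeriv_succ] using hbdd (n + 1) hn1) hz.ne).trans ?_
  exact add_le_add_right (integral_mono (hint n hn0).abs
    ((integrable_one_add_abs_rpow_neg hr).const_mul C) (hdecay n hn0)) _
end

section
/- Let d ≥ 2 be an integer and let μ : [0,∞) → ℝ be continuous with |μ(e)| ≤ C(1+e)^{-n₁} for some n₁ > d/2 + 1. Define φ(u) := ∫_{ℝ^{d-1}} μ(u² + |w|²) dw and, for z ∈ ℂ with Im z < 0, H(z) := ∫_ℝ φ(u)/(z − u) du. Then for every k ∈ ℝ^d with k ≠ 0 and every λ ∈ ℂ with Re λ > 0 (so that Im((−iλ ± |k|²)/(2|k|)) = −Re λ/(2|k|) < 0), one has the identity i ∫_{ℝ^d} (μ(|p|²) − μ(|k−p|²)) / (λ − 2i k·p + i|k|²) dp = (1/(2|k|)) [ H((−iλ + |k|²)/(2|k|)) − H((−iλ − |k|²)/(2|k|)) ]. -/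
open MeasureTheory
open scoped RealInnerProductSpace

/-!
Translating `p ↦ p + k` turns the `μ(|k - p|²)` term into the `μ(|p|²)` term with `|k|²`
replaced by `-|k|²`, so both are instances of `∫ μ(|p|²) / (λ - 2i k·p + i s) dp`. In an
orthonormal basis with first vector `k / |k|` this denominator depends only on the first
coordinate `u`, where it equals `2i|k| (z - u)` with `z = (-iλ + s) / (2|k|)`; integrating out
the other coordinates (Fubini) leaves `∫ φ(u) / (2i|k| (z - u)) du = H(z) / (2i|k|)`.
All integrals converge absolutely since `μ(|p|²)` is integrable for `n₁ > d/2` and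
`|λ - 2i k·p + i s| ≥ Re λ > 0`.
-/

theorem integrable_comp_norm_sq_of_abs_le_rpow {E : Type*} [NormedAddCommGroup E]
    [NormedSpace ℝ E] [FiniteDimensional ℝ E] [MeasurableSpace E] [BorelSpace E]
    {ν : Measure E} [ν.IsAddHaarMeasure] {μ : ℝ → ℝ} {C n₁ : ℝ} (hμ : Measurable μ)
    (hn₁ : (Module.finrank ℝ E : ℝ) / 2 < n₁) (hdecay : ∀ e, 0 ≤ e → |μ e| ≤ C * (1 + e) ^ (-n₁)) :
    Integrable (fun p => μ (‖p‖ ^ 2)) ν := by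
  have hmaj : Integrable (fun p : E => C * ((1 : ℝ) + ‖p‖ ^ 2) ^ (-(2 * n₁) / 2)) ν :=
    (integrable_rpow_neg_one_add_norm_sq (by linarith)).const_mul C
  refine hmaj.mono' (hμ.comp (by fun_prop)).aestronglyMeasurable (ae_of_all _ fun p => ?_)
  rw [Real.norm_eq_abs, show -(2 * n₁) / 2 = -n₁ by ring]
  exact hdecay _ (by positivity)

theorem MeasureTheory.Integrable.ofReal_mul_inv_of_le_re {α : Type*} [MeasurableSpace α]
    {ν : Measure α} {f : α → ℝ} {D : α → ℂ} {c : ℝ} (hf : Integrable f ν) (hc : 0 < c)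
    (hD : Measurable D) (hre : ∀ x, c ≤ (D x).re) :
    Integrable (fun x => (f x : ℂ) * (D x)⁻¹) ν :=
  hf.ofReal.mul_bdd hD.inv.aestronglyMeasurable <| ae_of_all _ fun x => by
    rw [norm_inv]
    exact inv_anti₀ hc ((hre x).trans (Complex.re_le_norm _))

theorem exists_measurePreserving_prod_of_norm_eq_one {m : ℕ}
    {v : EuclideanSpace ℝ (Fin (m + 1))} (hv : ‖v‖ = 1) :
    ∃ F : (ℝ × EuclideanSpace ℝ (Fin m)) ≃ᵐ EuclideanSpace ℝ (Fin (m + 1)),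
      MeasurePreserving F ∧ ∀ x, ‖F x‖ ^ 2 = x.1 ^ 2 + ‖x.2‖ ^ 2 ∧ ⟪v, F x⟫ = x.1 := by
  have hon : Orthonormal ℝ (({0} : Set (Fin (m + 1))).domRestrict fun _ => v) := by
    rw [orthonormal_iff_ite]
    rintro ⟨i, rfl⟩ ⟨j, rfl⟩
    simp [Set.domRestrict, hv]
  obtain ⟨b, hb⟩ := hon.exists_orthonormalBasis_extension_of_card_eq (by simp)
  let F := ((MeasurableEquiv.refl ℝ).prodCongr (MeasurableEquiv.toLp 2 (Fin m → ℝ)).symm).trans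
    ((MeasurableEquiv.piFinSuccAbove (fun _ => ℝ) 0).symm.trans
      ((MeasurableEquiv.toLp 2 (Fin (m + 1) → ℝ)).trans b.repr.symm.toHomeomorph.toMeasurableEquiv))
  have hF : ∀ x, F x = b.repr.symm (WithLp.toLp 2 (Fin.insertNth 0 x.1 x.2)) := fun x => rfl
  refine ⟨F, ?_, fun x => ⟨?_, ?_⟩⟩
  · exact (b.repr.symm.measurePreserving.comp
      (EuclideanSpace.volume_preserving_symm_measurableEquiv_toLp _).symm).comp
      ((volume_preserving_piFinSuccAbove (fun _ => ℝ) 0).symm.comp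
        ((MeasurePreserving.id volume).prod
          (EuclideanSpace.volume_preserving_symm_measurableEquiv_toLp _)))
  · rw [hF, LinearIsometryEquiv.norm_map, EuclideanSpace.norm_sq_eq, EuclideanSpace.norm_sq_eq,
      Fin.sum_univ_succAbove _ 0]
    simp
  · rw [hF, ← hb 0 rfl, ← b.repr.inner_map_map, b.repr_self, b.repr.apply_symm_apply,
      EuclideanSpace.inner_single_left]
    simp

theorem integral_mul_comp_inner_eq_integral_phiMarg {m : ℕ} (μ : ℝ → ℝ)
    {k : EuclideanSpace ℝ (Fin (m + 1))} (hk : k ≠ 0) {g : ℝ → ℂ}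
    (hint : Integrable fun p : EuclideanSpace ℝ (Fin (m + 1)) => (μ (‖p‖ ^ 2) : ℂ) * g ⟪k, p⟫) :
    ∫ p : EuclideanSpace ℝ (Fin (m + 1)), (μ (‖p‖ ^ 2) : ℂ) * g ⟪k, p⟫ =
      ∫ u : ℝ, (phiMarg (m + 1) μ u : ℂ) * g (‖k‖ * u) := by
  have hk' : ‖k‖ ≠ 0 := norm_ne_zero_iff.2 hk
  obtain ⟨F, hF, hFx⟩ := exists_measurePreserving_prod_of_norm_eq_one (v := ‖k‖⁻¹ • k)
    (by rw [norm_smul, norm_inv, norm_norm, inv_mul_cancel₀ hk'])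
  have hcomp (x : ℝ × EuclideanSpace ℝ (Fin m)) :
      (μ (‖F x‖ ^ 2) : ℂ) * g ⟪k, F x⟫ = (μ (x.1 ^ 2 + ‖x.2‖ ^ 2) : ℂ) * g (‖k‖ * x.1) := by
    rw [(hFx x).1, ← (hFx x).2, real_inner_smul_left, mul_inv_cancel_left₀ hk']
  have hint_prod :=
    ((hF.integrable_comp_emb F.measurableEmbedding).2 hint).congr (ae_of_all _ hcomp)
  rw [← hF.integral_comp', integral_congr_ae (ae_of_all _ hcomp), Measure.volume_eq_prod ℝ,
    integral_prod _ hint_prod]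
  congr with u
  dsimp only
  rw [integral_mul_const, integral_complex_ofReal]
  rfl

theorem I_mul_integral_mul_inv_eq_Hcauchy (φ : ℝ → ℝ) {r : ℝ} (hr : r ≠ 0) (lam s : ℂ) :
    Complex.I * ∫ u : ℝ, (φ u : ℂ) * (lam - 2 * Complex.I * ((r * u : ℝ) : ℂ) + Complex.I * s)⁻¹ =
      1 / (2 * r) * Hcauchy φ ((-Complex.I * lam + s) / (2 * r)) := by
  rw [Hcauchy, ← integral_const_mul, ← integral_const_mul]
  -- no condition on `lam` is needed: where the denominator vanishes, both sides are `0`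
  have hr' : (r : ℂ) ≠ 0 := by exact_mod_cast hr
  congr with u
  have hz : (-Complex.I * lam + s) / (2 * r) - u =
      (lam - 2 * Complex.I * ((r * u : ℝ) : ℂ) + Complex.I * s) / (2 * r * Complex.I) := by
    field_simp
    push_cast
    linear_combination (-lam) * Complex.I_sq
  rw [hz, div_div_eq_mul_div]
  field_simp

theorem stmt3_general (d : ℕ) (μ : ℝ → ℝ) (C n₁ : ℝ)
    (hcont : Continuous μ)
    (hn₁ : (d : ℝ) / 2 + 1 < n₁)
    (hdecay : ∀ e : ℝ, 0 ≤ e → |μ e| ≤ C * (1 + e) ^ (-n₁))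
    (k : EuclideanSpace ℝ (Fin d)) (hk : k ≠ 0)
    (lam : ℂ) (hlam : 0 < lam.re) :
    Complex.I * (∫ p : EuclideanSpace ℝ (Fin d),
      ((μ (‖p‖ ^ 2) - μ (‖k - p‖ ^ 2) : ℝ) : ℂ) /
        (lam - 2 * Complex.I * (⟪k, p⟫ : ℂ) + Complex.I * (‖k‖ : ℂ) ^ 2)) =
    (1 / (2 * (‖k‖ : ℂ))) *
      (Hcauchy (phiMarg d μ) ((-Complex.I * lam + (‖k‖ : ℂ) ^ 2) / (2 * (‖k‖ : ℂ))) -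
       Hcauchy (phiMarg d μ) ((-Complex.I * lam - (‖k‖ : ℂ) ^ 2) / (2 * (‖k‖ : ℂ)))) := by
  obtain ⟨m, rfl⟩ : ∃ m, d = m + 1 :=
    Nat.exists_eq_succ_of_ne_zero fun h => hk (by subst h; exact Subsingleton.elim _ _)
  have hμ : Integrable fun p : EuclideanSpace ℝ (Fin (m + 1)) => μ (‖p‖ ^ 2) :=
    integrable_comp_norm_sq_of_abs_le_rpow hcont.measurable
      (by rw [finrank_euclideanSpace_fin]; linarith) hdecay
  let f (s : ℝ) (p : EuclideanSpace ℝ (Fin (m + 1))) : ℂ :=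
    (μ (‖p‖ ^ 2) : ℂ) * (lam - 2 * Complex.I * (⟪k, p⟫ : ℂ) + Complex.I * s)⁻¹
  have hint (s : ℝ) : Integrable (f s) :=
    hμ.ofReal_mul_inv_of_le_re hlam (by fun_prop) fun p => by simp
  have hslice (s : ℝ) : Complex.I * ∫ p, f s p =
      1 / (2 * ‖k‖) * Hcauchy (phiMarg (m + 1) μ) ((-Complex.I * lam + s) / (2 * ‖k‖)) := by
    rw [integral_mul_comp_inner_eq_integral_phiMarg μ hk
      (g := fun t => (lam - 2 * Complex.I * (t : ℂ) + Complex.I * s)⁻¹) (hint s)]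
    exact I_mul_integral_mul_inv_eq_Hcauchy _ (norm_ne_zero_iff.2 hk) lam s
  have hsplit (p : EuclideanSpace ℝ (Fin (m + 1))) :
      ((μ (‖p‖ ^ 2) - μ (‖k - p‖ ^ 2) : ℝ) : ℂ) /
        (lam - 2 * Complex.I * (⟪k, p⟫ : ℂ) + Complex.I * (‖k‖ : ℂ) ^ 2) =
      f (‖k‖ ^ 2) p - f (-‖k‖ ^ 2) (p - k) := by
    simp only [f, inner_sub_right, real_inner_self_eq_norm_sq, norm_sub_rev p k]
    push_cast
    rw [sub_div, div_eq_mul_inv, div_eq_mul_inv]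
    congr 3
    ring
  rw [integral_congr_ae (ae_of_all _ hsplit), integral_sub (hint _) ((hint _).comp_sub_right k),
    integral_sub_right_eq_self (f (-‖k‖ ^ 2)), mul_sub, hslice, hslice]
  push_cast
  rw [← sub_eq_add_neg, ← mul_sub]

theorem stmt3 (d : ℕ) (hd : 2 ≤ d) (μ : ℝ → ℝ) (C n₁ : ℝ)
    (hcont : Continuous μ)
    (hn₁ : (d : ℝ) / 2 + 1 < n₁)
    (hdecay : ∀ e : ℝ, 0 ≤ e → |μ e| ≤ C * (1 + e) ^ (-n₁))
    (k : EuclideanSpace ℝ (Fin d)) (hk : k ≠ 0)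
    (lam : ℂ) (hlam : 0 < lam.re) :
    Complex.I * (∫ p : EuclideanSpace ℝ (Fin d),
      ((μ (‖p‖ ^ 2) - μ (‖k - p‖ ^ 2) : ℝ) : ℂ) /
        (lam - 2 * Complex.I * (⟪k, p⟫ : ℂ) + Complex.I * (‖k‖ : ℂ) ^ 2)) =
    (1 / (2 * (‖k‖ : ℂ))) *
      (Hcauchy (phiMarg d μ) ((-Complex.I * lam + (‖k‖ : ℂ) ^ 2) / (2 * (‖k‖ : ℂ))) -
       Hcauchy (phiMarg d μ) ((-Complex.I * lam - (‖k‖ : ℂ) ^ 2) / (2 * (‖k‖ : ℂ)))) :=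
  stmt3_general d μ C n₁ hcont hn₁ hdecay k hk lam hlam
end

section
/- Let φ : ℝ → ℂ be continuously differentiable with φ and φ' integrable on ℝ. Then for every τ ∈ ℝ the limit lim_{γ→0⁺} ∫_ℝ φ(u)/(τ − iγ − u) du exists, the principal value PV ∫ φ(u)/(τ−u) du := lim_{ε→0⁺} ∫_{|u−τ|>ε} φ(u)/(τ − u) du exists, and lim_{γ→0⁺} ∫_ℝ φ(u)/(τ − iγ − u) du = PV ∫_ℝ φ(u)/(τ − u) du + iπ φ(τ). -/
/-!
Split the line at the unit ball around `τ`. Outside it the kernel `1 / (τ - iγ - u)` has modulus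
at most `1`, so dominated convergence applies. Inside it, write `φ u = (φ u - φ τ) + φ τ`: the
difference quotient `(φ u - φ τ) / (τ - iγ - u)` is bounded by the Lipschitz constant of `φ`
uniformly in `γ`, so dominated convergence applies again, while the constant part integrates to
`φ τ (log (1 - iγ) - log (-1 - iγ))`, which tends to `iπ φ τ` because `log` jumps by `2πi`
across the negative real axis. For the principal value, the constant part integrates to zero over
the symmetric truncations by oddness of `1 / (τ - u)`.
-/

open MeasureTheory Set Filter Complex Metric Topology
open scoped NNReal

lemma abs_sub_le_norm_sub_I_mul_sub (τ γ u : ℝ) : |u - τ| ≤ ‖(τ : ℂ) - I * γ - u‖ := by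
  simpa [abs_sub_comm] using abs_re_le_norm ((τ : ℂ) - I * γ - u)

lemma abs_le_norm_sub_I_mul_sub (τ γ u : ℝ) : |γ| ≤ ‖(τ : ℂ) - I * γ - u‖ := by
  simpa using abs_im_le_norm ((τ : ℂ) - I * γ - u)

lemma integral_eq_zero_of_apply_sub_eq_neg {E : Type*} [NormedAddCommGroup E] [NormedSpace ℝ E]
    {f : ℝ → E} (a : ℝ) (hf : ∀ x, f (a - x) = -f x) : ∫ x, f x = 0 := by
  have h := integral_sub_left_eq_self f volume a
  simp only [hf, integral_neg] at h
  have : IsAddTorsionFree E := .of_isTorsionFree ℝ E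
  exact neg_eq_self.mp h

lemma setIntegral_div_sub_eq_zero (τ : ℝ) (c : ℂ) {A : Set ℝ} (hA : MeasurableSet A)
    (hsymm : ∀ x, 2 * τ - x ∈ A ↔ x ∈ A) : ∫ u in A, c / ((τ : ℂ) - u) = 0 := by
  rw [← integral_indicator hA]
  refine integral_eq_zero_of_apply_sub_eq_neg (2 * τ) fun x => ?_
  by_cases hx : x ∈ A
  · rw [indicator_of_mem ((hsymm x).2 hx), indicator_of_mem hx, ← div_neg]
    push_cast
    ring_nf
  · rw [indicator_of_notMem (mt (hsymm x).1 hx), indicator_of_notMem hx, neg_zero]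

lemma tendsto_setIntegral_inter_abs_sub_gt {g : ℝ → ℂ} {s : Set ℝ} (τ : ℝ)
    (hg : IntegrableOn g s) :
    Tendsto (fun ε : ℝ => ∫ u in {u | ε < |u - τ|} ∩ s, g u) (𝓝[>] 0) (𝓝 (∫ u in s, g u)) := by
  have hA : ∀ ε : ℝ, MeasurableSet {u : ℝ | ε < |u - τ|} := fun ε =>
    measurableSet_lt measurable_const (by fun_prop)
  simp_rw [inter_comm _ s, ← setIntegral_indicator (hA _)]
  refine tendsto_integral_filter_of_dominated_convergence (fun u => ‖g u‖)
    (Eventually.of_forall fun ε => hg.1.indicator (hA ε))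
    (Eventually.of_forall fun ε => ae_of_all _ fun u => norm_indicator_le_norm_self g u)
    hg.norm ?_
  filter_upwards [ae_restrict_of_ae (volume.ae_ne τ)] with u hu
  refine tendsto_const_nhds.congr' ?_
  filter_upwards [nhdsWithin_le_nhds (eventually_lt_nhds (abs_pos.2 (sub_ne_zero.2 hu)))]
    with ε hε
  exact (indicator_of_mem (s := {u : ℝ | ε < |u - τ|}) hε g).symm

lemma intervalIntegral_inv_sub_ofReal {w : ℂ} (hw : w.im ≠ 0) (a b : ℝ) :
    ∫ u in a..b, (w - u)⁻¹ = log (w - a) - log (w - b) := by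
  have hslit : ∀ u : ℝ, w - u ∈ slitPlane := fun u => by
    rw [mem_slitPlane_iff]; right; simpa using hw
  have hne : ∀ u : ℝ, w - u ≠ 0 := fun u => slitPlane_ne_zero (hslit u)
  have hderiv : ∀ u : ℝ, HasDerivAt (fun x : ℝ => -log (w - x)) (w - u)⁻¹ u := fun u => by
    have h := (((hasDerivAt_id (u : ℂ)).const_sub w).clog (hslit u)).comp_ofReal.neg
    exact h.congr_deriv (by simp only [id]; ring)
  rw [intervalIntegral.integral_eq_sub_of_hasDerivAt (fun u _ => hderiv u)
    ((Continuous.inv₀ (by fun_prop) hne).intervalIntegrable a b)]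
  ring

lemma tendsto_log_one_sub_sub_log_neg_one_sub :
    Tendsto (fun γ : ℝ => log (1 - I * γ) - log (-1 - I * γ)) (𝓝[>] 0) (𝓝 (Real.pi * I)) := by
  have h1 : Tendsto (fun γ : ℝ => log (1 - I * γ)) (𝓝[>] 0) (𝓝 0) := by
    have h := (continuousAt_clog (by simp : (1 : ℂ) ∈ slitPlane)).tendsto.comp
      ((by fun_prop : Continuous fun γ : ℝ => 1 - I * γ).tendsto' 0 1 (by simp))
    simpa [Function.comp_def] using h.mono_left nhdsWithin_le_nhds
  have h2 : Tendsto (fun γ : ℝ => -1 - I * γ) (𝓝[>] 0) (𝓝[{z : ℂ | z.im < 0}] (-1)) := by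
    refine tendsto_nhdsWithin_iff.2 ⟨?_, ?_⟩
    · exact ((by fun_prop : Continuous fun γ : ℝ => -1 - I * γ).tendsto' 0 (-1)
        (by simp)).mono_left nhdsWithin_le_nhds
    · filter_upwards [self_mem_nhdsWithin] with γ (hγ : 0 < γ)
      simpa using hγ
  have h3 := (tendsto_log_nhdsWithin_im_neg_of_re_neg_of_im_zero (by simp) (by simp)).comp h2
  simpa using h1.sub h3

lemma norm_div_sub_I_mul_sub_le (a : ℂ) {τ u : ℝ} (hu : 1 ≤ |u - τ|) (γ : ℝ) :
    ‖a / ((τ : ℂ) - I * γ - u)‖ ≤ ‖a‖ := by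
  rw [norm_div]
  exact div_le_self (norm_nonneg a) (hu.trans (abs_sub_le_norm_sub_I_mul_sub τ γ u))

lemma norm_sub_div_sub_I_mul_sub_le {φ : ℝ → ℂ} {K : ℝ≥0} {s : Set ℝ}
    (hlip : LipschitzOnWith K φ s) {τ u : ℝ} (hτ : τ ∈ s) (hu : u ∈ s) (γ : ℝ) :
    ‖(φ u - φ τ) / ((τ : ℂ) - I * γ - u)‖ ≤ K := by
  rw [norm_div]
  refine div_le_of_le_mul₀ (norm_nonneg _) K.2 ((hlip.norm_sub_le hu hτ).trans ?_)
  rw [Real.norm_eq_abs]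
  gcongr
  exact abs_sub_le_norm_sub_I_mul_sub τ γ u

lemma tendsto_setIntegral_div_sub_I_mul_sub {a : ℝ → ℂ} {s : Set ℝ} {τ : ℝ}
    (hs : MeasurableSet s) (ha : AEStronglyMeasurable a (volume.restrict s)) {F : ℝ → ℝ}
    (hF : IntegrableOn F s) (hbound : ∀ γ : ℝ, ∀ u ∈ s, ‖a u / ((τ : ℂ) - I * γ - u)‖ ≤ F u) :
    Tendsto (fun γ : ℝ => ∫ u in s, a u / ((τ : ℂ) - I * γ - u)) (𝓝[>] 0)
      (𝓝 (∫ u in s, a u / ((τ : ℂ) - u))) := by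
  refine tendsto_integral_filter_of_dominated_convergence F
    (Eventually.of_forall fun γ => (ha.aemeasurable.div (by fun_prop)).aestronglyMeasurable)
    (Eventually.of_forall fun γ => (ae_restrict_iff' hs).2 (ae_of_all _ (hbound γ))) hF ?_
  filter_upwards [ae_restrict_of_ae (volume.ae_ne τ)] with u hu
  have hne : (τ : ℂ) - u ≠ 0 := sub_ne_zero.2 (by exact_mod_cast hu.symm)
  refine (tendsto_const_nhds.div ?_ hne).mono_left nhdsWithin_le_nhds
  exact (by fun_prop : Continuous fun γ : ℝ => (τ : ℂ) - I * γ - u).tendsto' 0 _ (by simp)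

/-- On the unit ball around `τ` the singular part `φ τ / (τ - u)` is removed: its integrals over
the symmetric truncations `ε < |u - τ| ≤ 1` vanish. -/
noncomputable def cauchyPrincipalValue (φ : ℝ → ℂ) (τ : ℝ) : ℂ :=
  (∫ u in (closedBall τ 1)ᶜ, φ u / ((τ : ℂ) - u)) +
    ∫ u in closedBall τ 1, (φ u - φ τ) / ((τ : ℂ) - u)

section

variable {φ : ℝ → ℂ} {τ : ℝ} {K : ℝ≥0}

lemma one_lt_abs_sub_of_mem_compl_closedBall {u : ℝ} (hu : u ∈ (closedBall τ 1)ᶜ) :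
    1 < |u - τ| := by
  simpa [Real.dist_eq] using hu

lemma integrableOn_div_sub_compl_closedBall (hφ : Continuous φ) (hint : Integrable φ) :
    IntegrableOn (fun u => φ u / ((τ : ℂ) - u)) (closedBall τ 1)ᶜ := by
  refine hint.norm.integrableOn.mono' (by fun_prop : Measurable _).aestronglyMeasurable
    ((ae_restrict_iff' measurableSet_closedBall.compl).2 (ae_of_all _ fun u hu => ?_))
  simpa using norm_div_sub_I_mul_sub_le (φ u) (one_lt_abs_sub_of_mem_compl_closedBall hu).le 0

lemma integrableOn_sub_div_closedBall (hφ : Continuous φ)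
    (hlip : LipschitzOnWith K φ (closedBall τ 1)) :
    IntegrableOn (fun u => (φ u - φ τ) / ((τ : ℂ) - u)) (closedBall τ 1) := by
  refine IntegrableOn.of_bound measure_closedBall_lt_top
    (by fun_prop : Measurable _).aestronglyMeasurable K
    ((ae_restrict_iff' measurableSet_closedBall).2 (ae_of_all _ fun u hu => ?_))
  simpa using norm_sub_div_sub_I_mul_sub_le hlip (mem_closedBall_self zero_le_one) hu 0

lemma setIntegral_abs_sub_gt_eq (hφ : Continuous φ) (hint : Integrable φ)
    (hlip : LipschitzOnWith K φ (closedBall τ 1)) {ε : ℝ} (hε : ε ∈ Ioo 0 1) :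
    ∫ u in {u | ε < |u - τ|}, φ u / ((τ : ℂ) - u) =
      (∫ u in (closedBall τ 1)ᶜ, φ u / ((τ : ℂ) - u)) +
        ∫ u in {u | ε < |u - τ|} ∩ closedBall τ 1, (φ u - φ τ) / ((τ : ℂ) - u) := by
  set A := {u : ℝ | ε < |u - τ|}
  set B := closedBall τ 1
  have hAm : MeasurableSet A := measurableSet_lt measurable_const (by fun_prop)
  have hAB : A = Bᶜ ∪ (A ∩ B) := by
    ext u
    simp only [A, B, mem_union, mem_inter_iff, mem_compl_iff, mem_ofPred_eq, mem_closedBall,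
      Real.dist_eq, not_le]
    constructor
    · exact fun h => (lt_or_ge 1 |u - τ|).imp id fun h1 => ⟨h, h1⟩
    · rintro (h | ⟨h, -⟩)
      · exact hε.2.trans h
      · exact h
  have hsing : IntegrableOn (fun u : ℝ => φ τ / ((τ : ℂ) - u)) (A ∩ B) := by
    refine IntegrableOn.of_bound ((measure_mono inter_subset_right).trans_lt
      measure_closedBall_lt_top) (by fun_prop : Measurable _).aestronglyMeasurable (‖φ τ‖ / ε)
      ((ae_restrict_iff' (hAm.inter measurableSet_closedBall)).2 (ae_of_all _ fun u hu => ?_))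
    rw [norm_div]
    gcongr
    · exact hε.1
    · simpa using (hu.1 : ε < |u - τ|).le.trans (abs_sub_le_norm_sub_I_mul_sub τ 0 u)
  have hreg : IntegrableOn (fun u => (φ u - φ τ) / ((τ : ℂ) - u)) (A ∩ B) :=
    (integrableOn_sub_div_closedBall hφ hlip).mono_set inter_subset_right
  have hodd : ∫ u in A ∩ B, φ τ / ((τ : ℂ) - u) = 0 := by
    refine setIntegral_div_sub_eq_zero τ (φ τ) (hAm.inter measurableSet_closedBall) fun x => ?_
    have : |2 * τ - x - τ| = |x - τ| := by rw [← abs_neg]; ring_nf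
    simp only [A, B, mem_inter_iff, mem_ofPred_eq, mem_closedBall, Real.dist_eq, this]
  calc ∫ u in A, φ u / ((τ : ℂ) - u)
      = (∫ u in Bᶜ, φ u / ((τ : ℂ) - u)) + ∫ u in A ∩ B, φ u / ((τ : ℂ) - u) := by
        conv_lhs => rw [hAB]
        exact setIntegral_union (disjoint_compl_left.mono_right inter_subset_right)
          (hAm.inter measurableSet_closedBall) (integrableOn_div_sub_compl_closedBall hφ hint)
          ((hreg.add hsing).congr_fun
            (fun u _ => by simp only [Pi.add_apply, ← add_div, sub_add_cancel])
            (hAm.inter measurableSet_closedBall))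
    _ = (∫ u in Bᶜ, φ u / ((τ : ℂ) - u)) +
          ((∫ u in A ∩ B, (φ u - φ τ) / ((τ : ℂ) - u)) + ∫ u in A ∩ B, φ τ / ((τ : ℂ) - u)) := by
        rw [← integral_add hreg hsing]
        simp only [← add_div, sub_add_cancel]
    _ = _ := by rw [hodd, add_zero]

theorem tendsto_setIntegral_abs_sub_gt_cauchyPrincipalValue (hφ : Continuous φ)
    (hint : Integrable φ) (hlip : LipschitzOnWith K φ (closedBall τ 1)) :
    Tendsto (fun ε : ℝ => ∫ u in {u | ε < |u - τ|}, φ u / ((τ : ℂ) - u)) (𝓝[>] 0)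
      (𝓝 (cauchyPrincipalValue φ τ)) := by
  refine (tendsto_const_nhds.add (tendsto_setIntegral_inter_abs_sub_gt τ
    (integrableOn_sub_div_closedBall hφ hlip))).congr' ?_
  filter_upwards [Ioo_mem_nhdsGT one_pos] with ε hε
  exact (setIntegral_abs_sub_gt_eq hφ hint hlip hε).symm

lemma integral_div_sub_I_mul_sub_eq (hφ : Continuous φ) (hint : Integrable φ) {γ : ℝ}
    (hγ : 0 < γ) :
    ∫ u, φ u / ((τ : ℂ) - I * γ - u) =
      (∫ u in (closedBall τ 1)ᶜ, φ u / ((τ : ℂ) - I * γ - u)) +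
        (∫ u in closedBall τ 1, (φ u - φ τ) / ((τ : ℂ) - I * γ - u)) +
          φ τ * (log (1 - I * γ) - log (-1 - I * γ)) := by
  have hγ_le : ∀ u : ℝ, γ ≤ ‖(τ : ℂ) - I * γ - u‖ := fun u =>
    (le_abs_self γ).trans (abs_le_norm_sub_I_mul_sub τ γ u)
  have hne : ∀ u : ℝ, (τ : ℂ) - I * γ - u ≠ 0 := fun u =>
    norm_pos_iff.1 (hγ.trans_le (hγ_le u))
  have hint_γ : Integrable fun u => φ u / ((τ : ℂ) - I * γ - u) := by
    refine (hint.norm.div_const γ).mono' (by fun_prop : Measurable _).aestronglyMeasurable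
      (ae_of_all _ fun u => ?_)
    rw [norm_div]
    gcongr
    exact hγ_le u
  have hreg : IntegrableOn (fun u => (φ u - φ τ) / ((τ : ℂ) - I * γ - u)) (closedBall τ 1) :=
    ((hφ.sub continuous_const).div (by fun_prop) hne).continuousOn.integrableOn_compact
      (isCompact_closedBall τ 1)
  have hsing : IntegrableOn (fun u : ℝ => φ τ / ((τ : ℂ) - I * γ - u)) (closedBall τ 1) :=
    (continuous_const.div (by fun_prop) hne).continuousOn.integrableOn_compact
      (isCompact_closedBall τ 1)
  have hlog : ∫ u in closedBall τ 1, φ τ / ((τ : ℂ) - I * γ - u) =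
      φ τ * (log (1 - I * γ) - log (-1 - I * γ)) := by
    rw [Real.closedBall_eq_Icc, integral_Icc_eq_integral_Ioc,
      ← intervalIntegral.integral_of_le (by linarith)]
    simp_rw [div_eq_mul_inv]
    rw [intervalIntegral.integral_const_mul,
      intervalIntegral_inv_sub_ofReal (by simpa using hγ.ne')]
    congr 3 <;> push_cast <;> ring
  rw [← integral_add_compl (s := closedBall τ 1) measurableSet_closedBall hint_γ, add_comm,
    add_assoc, ← hlog, ← integral_add hreg hsing]
  simp only [← add_div, sub_add_cancel]

theorem tendsto_integral_div_sub_I_mul_sub (hφ : Continuous φ) (hint : Integrable φ)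
    (hlip : LipschitzOnWith K φ (closedBall τ 1)) :
    Tendsto (fun γ : ℝ => ∫ u, φ u / ((τ : ℂ) - I * γ - u)) (𝓝[>] 0)
      (𝓝 (cauchyPrincipalValue φ τ + Real.pi * I * φ τ)) := by
  have hfar := tendsto_setIntegral_div_sub_I_mul_sub (s := (closedBall τ 1)ᶜ)
    measurableSet_closedBall.compl hφ.aestronglyMeasurable hint.norm.integrableOn fun γ u hu =>
      norm_div_sub_I_mul_sub_le (φ u) (one_lt_abs_sub_of_mem_compl_closedBall hu).le γ
  have hnear := tendsto_setIntegral_div_sub_I_mul_sub (a := fun u => φ u - φ τ)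
    measurableSet_closedBall (hφ.sub continuous_const).aestronglyMeasurable
    (integrableOn_const measure_closedBall_lt_top.ne) fun γ u hu =>
      norm_sub_div_sub_I_mul_sub_le hlip (mem_closedBall_self zero_le_one) hu γ
  have hsing := tendsto_log_one_sub_sub_log_neg_one_sub.const_mul (φ τ)
  refine Tendsto.congr' ?_ (((hfar.add hnear).add hsing).trans_eq ?_)
  · filter_upwards [self_mem_nhdsWithin] with γ hγ
    exact (integral_div_sub_I_mul_sub_eq hφ hint hγ).symm
  · rw [cauchyPrincipalValue]
    congr 1
    ring

end

theorem stmt7_general (φ : ℝ → ℂ)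
    (hC1 : ContDiff ℝ 1 φ)
    (hint : Integrable φ) :
    ∀ τ : ℝ, ∃ PV : ℂ,
      Filter.Tendsto (fun ε : ℝ => ∫ u in {u : ℝ | ε < |u - τ|}, φ u / ((τ : ℂ) - u))
        (nhdsWithin 0 (Set.Ioi 0)) (nhds PV) ∧
      Filter.Tendsto (fun γ : ℝ => ∫ u : ℝ, φ u / ((τ : ℂ) - Complex.I * γ - u))
        (nhdsWithin 0 (Set.Ioi 0))
        (nhds (PV + Real.pi * Complex.I * φ τ)) := by
  intro τ
  obtain ⟨K, hlip⟩ := hC1.contDiffOn.exists_lipschitzOnWith one_ne_zero (convex_closedBall τ 1)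
    (isCompact_closedBall τ 1)
  exact ⟨cauchyPrincipalValue φ τ,
    tendsto_setIntegral_abs_sub_gt_cauchyPrincipalValue hC1.continuous hint hlip,
    tendsto_integral_div_sub_I_mul_sub hC1.continuous hint hlip⟩

theorem stmt7 (φ : ℝ → ℂ)
    (hC1 : ContDiff ℝ 1 φ)
    (hint : Integrable φ)
    (hint' : Integrable (deriv φ)) :
    ∀ τ : ℝ, ∃ PV : ℂ,
      Filter.Tendsto (fun ε : ℝ => ∫ u in {u : ℝ | ε < |u - τ|}, φ u / ((τ : ℂ) - u))
        (nhdsWithin 0 (Set.Ioi 0)) (nhds PV) ∧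
      Filter.Tendsto (fun γ : ℝ => ∫ u : ℝ, φ u / ((τ : ℂ) - Complex.I * γ - u))
        (nhdsWithin 0 (Set.Ioi 0))
        (nhds (PV + Real.pi * Complex.I * φ τ)) :=
  stmt7_general φ hC1 hint
end

section
/- Let Υ ∈ (0,∞) and let φ : ℝ → [0,∞) be even and continuous with φ(u) > 0 for |u| < Υ, φ(u) = 0 for |u| ≥ Υ, and ∫_{−Υ}^{Υ} φ(u)/(Υ − u) du < ∞. For κ > 0 define Φ(κ) := 1 − (1/(2κ²)) ∫_{−Υ}^{Υ} φ(u) / ((Υ − u)(Υ + κ − u)) du. Then Φ is continuous and strictly increasing on (0,∞), Φ(κ) → −∞ as κ → 0⁺, and Φ(κ) → 1 as κ → ∞. Consequently there exists a unique κ₀ > 0 with Φ(κ₀) = 0, i.e. κ₀² = (1/2) ∫_{−Υ}^{Υ} φ(u)/((Υ − u)(Υ + κ₀ − u)) du, and Φ(κ) < 0 for 0 < κ < κ₀ while Φ(κ) > 0 for κ > κ₀. -/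
open MeasureTheory

open Filter in
private lemma stmt11_aux_true : True := trivial

/-- The function `Φ(κ) = 1 − (1/(2κ²)) ∫_{−Υ}^{Υ} φ(u)/((Υ−u)(Υ+κ−u)) du`
whose unique positive zero is the survival threshold `κ₀`. -/
noncomputable def PhiFun (φ : ℝ → ℝ) (Υ : ℝ) (κ : ℝ) : ℝ :=
  1 - (1 / (2 * κ ^ 2)) *
    ∫ u in Set.Ioo (-Υ) Υ, φ u / ((Υ - u) * (Υ + κ - u))

open Filter

theorem stmt11 (Υ : ℝ) (hΥ : 0 < Υ) (φ : ℝ → ℝ)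
    (hpos : ∀ u : ℝ, 0 ≤ φ u)
    (heven : ∀ u : ℝ, φ (-u) = φ u)
    (hcont : Continuous φ)
    (hppos : ∀ u : ℝ, |u| < Υ → 0 < φ u)
    (hsupp : ∀ u : ℝ, Υ ≤ |u| → φ u = 0)
    (hint : IntegrableOn (fun u : ℝ => φ u / (Υ - u)) (Set.Ioo (-Υ) Υ)) :
    ContinuousOn (PhiFun φ Υ) (Set.Ioi 0) ∧
    StrictMonoOn (PhiFun φ Υ) (Set.Ioi 0) ∧
    Filter.Tendsto (PhiFun φ Υ) (nhdsWithin 0 (Set.Ioi 0)) Filter.atBot ∧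
    Filter.Tendsto (PhiFun φ Υ) Filter.atTop (nhds 1) ∧
    ∃ κ₀ : ℝ, 0 < κ₀ ∧ PhiFun φ Υ κ₀ = 0 ∧
      (∀ κ : ℝ, 0 < κ → PhiFun φ Υ κ = 0 → κ = κ₀) ∧
      κ₀ ^ 2 = (1 / 2) *
        ∫ u in Set.Ioo (-Υ) Υ, φ u / ((Υ - u) * (Υ + κ₀ - u)) ∧
      (∀ κ : ℝ, 0 < κ → κ < κ₀ → PhiFun φ Υ κ < 0) ∧
      (∀ κ : ℝ, κ₀ < κ → 0 < PhiFun φ Υ κ) := by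
  classical
  set S : Set ℝ := Set.Ioo (-Υ) Υ with hSdef
  set F : ℝ → ℝ → ℝ := fun κ u => φ u / ((Υ - u) * (Υ + κ - u)) with hFdef
  set I : ℝ → ℝ := fun κ => ∫ u in S, F κ u with hIdef
  have hPhi : ∀ κ, PhiFun φ Υ κ = 1 - (1 / (2 * κ ^ 2)) * I κ := fun κ => rfl
  -- basic pointwise facts
  have hden : ∀ κ : ℝ, 0 < κ → ∀ u ∈ S, 0 < (Υ - u) * (Υ + κ - u) := by
    intro κ hκ u hu
    have h1 : 0 < Υ - u := by simp only [hSdef, Set.mem_Ioo] at hu; linarith [hu.2]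
    have h2 : 0 < Υ + κ - u := by simp only [hSdef, Set.mem_Ioo] at hu; linarith [hu.2]
    positivity
  have hFnonneg : ∀ κ : ℝ, 0 < κ → ∀ u ∈ S, 0 ≤ F κ u := by
    intro κ hκ u hu
    exact div_nonneg (hpos u) (hden κ hκ u hu).le
  have hFbound : ∀ κ : ℝ, 0 < κ → ∀ u ∈ S, F κ u ≤ κ⁻¹ * (φ u / (Υ - u)) := by
    intro κ hκ u hu
    simp only [hSdef, Set.mem_Ioo] at hu
    have h1 : 0 < Υ - u := by linarith [hu.2]
    have h2 : κ ≤ Υ + κ - u := by linarith [hu.2]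
    have heq : F κ u = (φ u / (Υ - u)) * (Υ + κ - u)⁻¹ := by
      simp only [hFdef]; field_simp
    rw [heq, mul_comm (κ⁻¹) _]
    exact mul_le_mul_of_nonneg_left (inv_anti₀ hκ h2)
      (div_nonneg (hpos u) h1.le)
  have hmeas : ∀ κ : ℝ, AEStronglyMeasurable (F κ) (volume.restrict S) := by
    intro κ
    exact (hcont.measurable.div
      (((continuous_const.sub continuous_id).mul
        (continuous_const.sub continuous_id)).measurable)).aestronglyMeasurable
  have hSmeas : MeasurableSet S := measurableSet_Ioo
  have hInt : ∀ κ : ℝ, 0 < κ → IntegrableOn (F κ) S := by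
    intro κ hκ
    apply Integrable.mono' (hint.const_mul κ⁻¹) (hmeas κ)
    rw [MeasureTheory.ae_restrict_iff' hSmeas]
    filter_upwards with u hu
    rw [Real.norm_eq_abs, abs_of_nonneg (hFnonneg κ hκ u hu)]
    exact hFbound κ hκ u hu
  -- positivity of I
  have hSvol : 0 < volume S := by
    rw [hSdef, Real.volume_Ioo]
    simp only [ENNReal.ofReal_pos]
    linarith
  have hFpos : ∀ κ : ℝ, 0 < κ → ∀ u ∈ S, 0 < F κ u := by
    intro κ hκ u hu
    have hu' : |u| < Υ := by
      simp only [hSdef, Set.mem_Ioo] at hu; rw [abs_lt]; exact hu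
    exact div_pos (hppos u hu') (hden κ hκ u hu)
  have hIpos : ∀ κ : ℝ, 0 < κ → 0 < I κ := by
    intro κ hκ
    show 0 < ∫ u in S, F κ u
    refine (MeasureTheory.setIntegral_pos_iff_support_of_nonneg_ae ?_ (hInt κ hκ)).mpr ?_
    · filter_upwards [MeasureTheory.ae_restrict_mem hSmeas] with u hu
      exact hFnonneg κ hκ u hu
    · refine lt_of_lt_of_le hSvol (measure_mono ?_)
      intro u hu
      exact ⟨(hFpos κ hκ u hu).ne', hu⟩
  -- strict antitonicity of I
  have hImono : ∀ κ₁ κ₂ : ℝ, 0 < κ₁ → κ₁ < κ₂ → I κ₂ < I κ₁ := by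
    intro κ₁ κ₂ h1 h12
    have h2 : 0 < κ₂ := h1.trans h12
    have hFle : ∀ u ∈ S, F κ₂ u ≤ F κ₁ u := by
      intro u hu
      simp only [hSdef, Set.mem_Ioo] at hu
      have ha : 0 < Υ - u := by linarith [hu.2]
      have hb : 0 < Υ + κ₁ - u := by linarith [hu.2]
      simp only [hFdef]
      apply div_le_div_of_nonneg_left (hpos u) (by positivity)
      nlinarith
    have hdiff : 0 < ∫ u in S, (F κ₁ u - F κ₂ u) := by
      refine (MeasureTheory.setIntegral_pos_iff_support_of_nonneg_ae
        (f := fun u => F κ₁ u - F κ₂ u) ?_ ((hInt κ₁ h1).sub (hInt κ₂ h2))).mpr ?_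
      · filter_upwards [MeasureTheory.ae_restrict_mem hSmeas] with u hu
        simpa using sub_nonneg.mpr (hFle u hu)
      · refine lt_of_lt_of_le hSvol (measure_mono ?_)
        intro u hu
        refine ⟨?_, hu⟩
        have hu' : |u| < Υ := by
          simp only [hSdef, Set.mem_Ioo] at hu; rw [abs_lt]; exact hu
        have hφ := hppos u hu'
        have hlt : F κ₂ u < F κ₁ u := by
          simp only [hSdef, Set.mem_Ioo] at hu
          have ha : 0 < Υ - u := by linarith [hu.2]
          have hb : 0 < Υ + κ₁ - u := by linarith [hu.2]
          simp only [hFdef]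
          apply div_lt_div_of_pos_left hφ (by positivity)
          nlinarith
        exact (sub_pos.mpr hlt).ne'
    rw [MeasureTheory.integral_sub (hInt κ₁ h1) (hInt κ₂ h2)] at hdiff
    simp only [hIdef]
    linarith
  -- strict monotonicity of Phi
  have hmonoPhi : StrictMonoOn (PhiFun φ Υ) (Set.Ioi 0) := by
    intro a ha b hb hab
    simp only [Set.mem_Ioi] at ha hb
    rw [hPhi, hPhi]
    have h1 : (1 / (2 * b ^ 2)) * I b < (1 / (2 * b ^ 2)) * I a :=
      mul_lt_mul_of_pos_left (hImono a b ha hab) (by positivity)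
    have h2 : (1 / (2 * b ^ 2)) * I a ≤ (1 / (2 * a ^ 2)) * I a :=
      mul_le_mul_of_nonneg_right
        (one_div_le_one_div_of_le (by positivity) (by nlinarith)) (hIpos a ha).le
    linarith
  -- continuity
  have hIcont : ∀ κ₀ : ℝ, 0 < κ₀ → ContinuousAt I κ₀ := by
    intro κ₀ hκ₀
    apply MeasureTheory.continuousAt_of_dominated
      (bound := fun u => (κ₀ / 2)⁻¹ * (φ u / (Υ - u)))
    · exact Filter.Eventually.of_forall hmeas
    · have hev : ∀ᶠ κ in nhds κ₀, κ ∈ Set.Ioi (κ₀ / 2) :=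
        Ioi_mem_nhds (by linarith)
      filter_upwards [hev] with κ hκ
      simp only [Set.mem_Ioi] at hκ
      have hκpos : 0 < κ := by linarith
      rw [MeasureTheory.ae_restrict_iff' hSmeas]
      filter_upwards with u hu
      rw [Real.norm_eq_abs, abs_of_nonneg (hFnonneg κ hκpos u hu)]
      refine (hFbound κ hκpos u hu).trans ?_
      exact mul_le_mul_of_nonneg_right (inv_anti₀ (by positivity) hκ.le)
        (div_nonneg (hpos u)
          (by simp only [hSdef, Set.mem_Ioo] at hu; linarith [hu.2]))
    · exact hint.const_mul _
    · rw [MeasureTheory.ae_restrict_iff' hSmeas]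
      filter_upwards with u hu
      have hd := hden κ₀ hκ₀ u hu
      have hc : Continuous fun κ : ℝ => (Υ - u) * (Υ + κ - u) :=
        continuous_const.mul ((continuous_const.add continuous_id).sub continuous_const)
      exact continuousAt_const.div hc.continuousAt hd.ne'
  have hPhiContAt : ∀ κ₀ : ℝ, 0 < κ₀ → ContinuousAt (PhiFun φ Υ) κ₀ := by
    intro κ₀ hκ₀
    have h1 : ContinuousAt (fun κ : ℝ => 1 / (2 * κ ^ 2)) κ₀ :=
      continuousAt_const.div ((continuous_const.mul (continuous_pow 2)).continuousAt)
        (by positivity)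
    have h2 : ContinuousAt (fun κ => 1 - (1 / (2 * κ ^ 2)) * I κ) κ₀ :=
      continuousAt_const.sub (h1.mul (hIcont κ₀ hκ₀))
    exact h2.congr (by filter_upwards with κ; rw [hPhi])
  have hPhiCont : ContinuousOn (PhiFun φ Υ) (Set.Ioi 0) := by
    intro κ hκ
    exact (hPhiContAt κ hκ).continuousWithinAt
  -- limit at infinity
  have hIle : ∀ κ : ℝ, 0 < κ → I κ ≤ κ⁻¹ * ∫ u in S, φ u / (Υ - u) := by
    intro κ hκ
    rw [← integral_const_mul]
    exact MeasureTheory.setIntegral_mono_on (hInt κ hκ) (hint.const_mul _) hSmeas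
      (hFbound κ hκ)
  have hTop : Filter.Tendsto (PhiFun φ Υ) Filter.atTop (nhds 1) := by
    set A : ℝ := ∫ u in S, φ u / (Υ - u) with hA
    have hA0 : 0 ≤ A := by
      apply MeasureTheory.setIntegral_nonneg hSmeas
      intro u hu
      exact div_nonneg (hpos u) (by simp only [hSdef, Set.mem_Ioo] at hu; linarith [hu.2])
    have hg : Filter.Tendsto (fun κ => (1 / (2 * κ ^ 2)) * I κ) Filter.atTop (nhds 0) := by
      apply squeeze_zero' (g := fun κ : ℝ => (2 * κ ^ 2)⁻¹ * (κ⁻¹ * A))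
      · filter_upwards [Filter.eventually_gt_atTop 0] with κ hκ
        exact mul_nonneg (by positivity) (hIpos κ hκ).le
      · filter_upwards [Filter.eventually_gt_atTop 0] with κ hκ
        have h1 : (1 / (2 * κ ^ 2)) * I κ ≤ (1 / (2 * κ ^ 2)) * (κ⁻¹ * A) :=
          mul_le_mul_of_nonneg_left (hIle κ hκ) (by positivity)
        simpa [one_div] using h1
      · have h3a : Filter.Tendsto (fun κ : ℝ => (2 * κ ^ 2)⁻¹) Filter.atTop (nhds 0) := by
          have h3c : Filter.Tendsto (fun κ : ℝ => 2 * κ ^ 2) Filter.atTop Filter.atTop :=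
            (tendsto_pow_atTop (by norm_num)).const_mul_atTop (by norm_num)
          simpa [Pi.inv_def] using h3c.inv_tendsto_atTop
        have h3b : Filter.Tendsto (fun κ : ℝ => κ⁻¹ * A) Filter.atTop (nhds 0) := by
          simpa using tendsto_inv_atTop_zero.mul_const A
        simpa using h3a.mul h3b
    have h5 := (tendsto_const_nhds (x := (1:ℝ)) (f := Filter.atTop)).sub hg
    simp only [sub_zero] at h5
    exact h5.congr (fun κ => (hPhi κ).symm)
  -- limit at 0+
  have hBot : Filter.Tendsto (PhiFun φ Υ) (nhdsWithin 0 (Set.Ioi 0)) Filter.atBot := by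
    have hI1 : 0 < I 1 := hIpos 1 one_pos
    have hmaj : Filter.Tendsto (fun κ : ℝ => 1 - (I 1 / 2) * (κ ^ 2)⁻¹)
        (nhdsWithin 0 (Set.Ioi 0)) Filter.atBot := by
      have hsq : Filter.Tendsto (fun κ : ℝ => κ ^ 2) (nhdsWithin 0 (Set.Ioi 0))
          (nhdsWithin 0 (Set.Ioi 0)) := by
        apply tendsto_nhdsWithin_of_tendsto_nhds_of_eventually_within
        · have h6 : Filter.Tendsto (fun κ : ℝ => κ ^ 2) (nhds 0) (nhds 0) := by
            simpa using (continuous_pow 2).tendsto (0 : ℝ)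
          exact h6.mono_left nhdsWithin_le_nhds
        · filter_upwards [self_mem_nhdsWithin] with κ hκ
          simp only [Set.mem_Ioi] at hκ ⊢
          positivity
      have hinv : Filter.Tendsto (fun κ : ℝ => (κ ^ 2)⁻¹)
          (nhdsWithin 0 (Set.Ioi 0)) Filter.atTop :=
        tendsto_inv_nhdsGT_zero.comp hsq
      have hmul : Filter.Tendsto (fun κ : ℝ => (I 1 / 2) * (κ ^ 2)⁻¹)
          (nhdsWithin 0 (Set.Ioi 0)) Filter.atTop :=
        hinv.const_mul_atTop (by positivity)
      have h7 : Filter.Tendsto (fun κ : ℝ => 1 + -((I 1 / 2) * (κ ^ 2)⁻¹))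
          (nhdsWithin 0 (Set.Ioi 0)) Filter.atBot :=
        tendsto_atBot_add_const_left _ 1 (by
          rw [Filter.tendsto_neg_atBot_iff]; exact hmul)
      exact h7.congr (fun κ => by ring)
    apply tendsto_atBot_mono' _ ?_ hmaj
    have hev : ∀ᶠ κ in nhdsWithin (0:ℝ) (Set.Ioi 0), κ ∈ Set.Ioc (0:ℝ) 1 := by
      have h1 : ∀ᶠ κ in nhdsWithin (0:ℝ) (Set.Ioi 0), κ < (1:ℝ) :=
        nhdsWithin_le_nhds (eventually_lt_nhds one_pos)
      filter_upwards [self_mem_nhdsWithin, h1] with κ h2 h3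
      exact ⟨h2, h3.le⟩
    filter_upwards [hev] with κ hκ
    obtain ⟨hκ0, hκ1⟩ := hκ
    rw [hPhi]
    have hII : I 1 ≤ I κ := by
      rcases lt_or_eq_of_le hκ1 with h | h
      · exact (hImono κ 1 hκ0 h).le
      · rw [h]
    have h4 : (I 1 / 2) * (κ ^ 2)⁻¹ ≤ (1 / (2 * κ ^ 2)) * I κ := by
      have heq : (I 1 / 2) * (κ ^ 2)⁻¹ = (1 / (2 * κ ^ 2)) * I 1 := by
        have hκ0' : κ ≠ 0 := ne_of_gt hκ0
        field_simp <;> ring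
      rw [heq]
      exact mul_le_mul_of_nonneg_left hII (by positivity)
    linarith
  refine ⟨hPhiCont, hmonoPhi, hBot, hTop, ?_⟩
  -- existence of the root
  have hNeBot : (nhdsWithin (0:ℝ) (Set.Ioi 0)).NeBot := nhdsGT_neBot 0
  obtain ⟨a, haneg, ha0⟩ :=
    ((hBot.eventually (Filter.eventually_le_atBot (-1))).and self_mem_nhdsWithin).exists
  have ha0' : 0 < a := ha0
  obtain ⟨b, ⟨hba, hb0⟩, hbpos⟩ :=
    (((Filter.eventually_gt_atTop a).and (Filter.eventually_gt_atTop 0)).and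
      (hTop.eventually_const_lt (by norm_num : (1:ℝ)/2 < 1))).exists
  have hmem : (0:ℝ) ∈ Set.Icc (PhiFun φ Υ a) (PhiFun φ Υ b) :=
    ⟨by linarith, by linarith⟩
  obtain ⟨κ₀, hκ₀mem, hκ₀⟩ := intermediate_value_Icc hba.le
    (hPhiCont.mono (fun x hx => lt_of_lt_of_le ha0' hx.1)) hmem
  have hκ₀pos : 0 < κ₀ := lt_of_lt_of_le ha0' hκ₀mem.1
  refine ⟨κ₀, hκ₀pos, hκ₀, ?_, ?_, ?_, ?_⟩
  · intro κ hκ hκz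
    exact hmonoPhi.injOn hκ hκ₀pos (by rw [hκz, hκ₀])
  · have h8 := hκ₀
    rw [hPhi] at h8
    have hIκ : I κ₀ = 2 * κ₀ ^ 2 := by
      have h2 : (2 * κ₀ ^ 2) ≠ 0 := by positivity
      field_simp at h8
      linarith
    show κ₀ ^ 2 = (1/2) * I κ₀
    rw [hIκ]; ring
  · intro κ hκ hκlt
    have h9 := hmonoPhi hκ hκ₀pos hκlt
    rw [hκ₀] at h9
    exact h9
  · intro κ hκgt
    have h9 := hmonoPhi hκ₀pos (Set.mem_Ioi.mpr (hκ₀pos.trans hκgt)) hκgt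
    rw [hκ₀] at h9
    exact h9
end

section
/- Let Υ ∈ (0,∞) and let φ : ℝ → [0,∞) be even and continuous with φ(u) > 0 for |u| < Υ, φ(u) = 0 for |u| ≥ Υ, and ∫_{−Υ}^{Υ} φ(u)/(Υ − u) du < ∞; let κ₀ > 0 be the unique zero of Φ(κ) := 1 − (1/(2κ²)) ∫_{−Υ}^{Υ} φ(u)/((Υ − u)(Υ + κ − u)) du. For 0 < |k| ≤ κ₀ and τ ≥ 2|k|Υ + |k|², define F_k(τ) := 1 − (1/(2|k|²)) ∫_{−Υ}^{Υ} φ(u) / ( ((τ − |k|²)/(2|k|) − u)((τ + |k|²)/(2|k|) − u) ) du. Then F_k is real-valued, continuous and strictly increasing on [2|k|Υ + |k|², ∞), F_k(2|k|Υ + |k|²) = Φ(|k|) ≤ 0, and F_k(τ) → 1 as τ → ∞. Consequently there is a unique τ_*(k) ∈ [2|k|Υ + |k|², ∞) with F_k(τ_*(k)) = 0, it satisfies ∫_{−Υ}^{Υ} φ(u) / ( (τ_*(k)/2 − |k|u)² − |k|⁴/4 ) du = 2, and moreover τ_*(κ₀) = 2κ₀Υ + κ₀² and τ_*(k) → √(2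 ∫_ℝ φ(u) du) as |k| → 0⁺. -/
open MeasureTheory

/-- The boundary dielectric function on the imaginary axis, as a function of
`r = |k|` and `τ`:
`F_k(τ) = 1 − (1/(2|k|²)) ∫_{−Υ}^{Υ} φ(u)/(((τ−|k|²)/(2|k|) − u)((τ+|k|²)/(2|k|) − u)) du`. -/
noncomputable def Ffun (φ : ℝ → ℝ) (Υ : ℝ) (r τ : ℝ) : ℝ :=
  1 - (1 / (2 * r ^ 2)) *
    ∫ u in Set.Ioo (-Υ) Υ,
      φ u / (((τ - r ^ 2) / (2 * r) - u) * ((τ + r ^ 2) / (2 * r) - u))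

/-!
Write `J(a, b) = ∫_{-Υ}^{Υ} φ(u) / ((a - u)(b - u)) du` and `a(τ) = (τ - r²)/(2r)`, so that
`F_r(τ) = 1 - J(a(τ), a(τ) + r) / (2r²)` and `a(2rΥ + r²) = Υ`. For `a ≥ Υ` the integrand is
positive, decreasing in `a` and `b` (strictly in `a`), and dominated by `φ(u) / ((Υ - u)(b - Υ))`, which is
integrable by hypothesis. This gives continuity and strict monotonicity of `F_r`, the limit `1`,
and `F_r(2rΥ + r²) = Φ(r) ≤ 0`, the latter because `J(Υ, Υ + r) ≥ J(Υ, Υ + κ₀) = 2κ₀² ≥ 2r²`.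

Since `(τ/2 - ru)² - r⁴/4 = r² (a(τ) - u)(a(τ) + r - u)`, dominated convergence gives
`F_r(τ) → 1 - 2ρ/τ²` as `r → 0⁺`; this limit is negative for `τ < √(2ρ)` and positive for
`τ > √(2ρ)`, so monotonicity traps the zero `τ_*(r)` near `√(2ρ)`.
-/

open Set Filter Topology

theorem setIntegral_lt_setIntegral_of_forall_lt {α : Type*} [MeasurableSpace α] {μ : Measure α}
    {s : Set α} {f g : α → ℝ} (hs : MeasurableSet s) (hμ : μ s ≠ 0)
    (hf : IntegrableOn f s μ) (hg : IntegrableOn g s μ) (hlt : ∀ x ∈ s, f x < g x) :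
    ∫ x in s, f x ∂μ < ∫ x in s, g x ∂μ := by
  rw [← sub_pos, ← integral_sub hg hf, setIntegral_pos_iff_support_of_nonneg_ae
    (ae_restrict_of_forall_mem hs fun x hx => (sub_pos.2 (hlt x hx)).le) (hg.sub hf)]
  rwa [inter_eq_right.2 fun x hx => Function.mem_support.2 (sub_pos.2 (hlt x hx)).ne',
    pos_iff_ne_zero]

noncomputable def pairIntegral (φ : ℝ → ℝ) (Υ a b : ℝ) : ℝ :=
  ∫ u in Ioo (-Υ) Υ, φ u / ((a - u) * (b - u))

section PairIntegral

variable {φ : ℝ → ℝ} {Υ : ℝ}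

theorem integrableOn_div_of_mul_le (hint : IntegrableOn (fun u => φ u / (Υ - u)) (Ioo (-Υ) Υ))
    {D : ℝ → ℝ} (hD : ContinuousOn D (Ioo (-Υ) Υ)) {c : ℝ} (hc : 0 < c)
    (hle : ∀ u ∈ Ioo (-Υ) Υ, c * (Υ - u) ≤ D u) :
    IntegrableOn (fun u => φ u / D u) (Ioo (-Υ) Υ) := by
  have hDpos : ∀ u ∈ Ioo (-Υ) Υ, 0 < D u := fun u hu =>
    (mul_pos hc (sub_pos.2 hu.2)).trans_le (hle u hu)
  have hw : ContinuousOn (fun u => (Υ - u) / D u) (Ioo (-Υ) Υ) :=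
    (continuousOn_const.sub continuousOn_id).div hD fun u hu => (hDpos u hu).ne'
  refine (hint.bdd_mul (c := c⁻¹) (hw.aestronglyMeasurable measurableSet_Ioo) ?_).congr ?_
  · refine ae_restrict_of_forall_mem measurableSet_Ioo fun u hu => ?_
    rw [Real.norm_eq_abs, abs_of_pos (div_pos (sub_pos.2 hu.2) (hDpos u hu)),
      div_le_iff₀ (hDpos u hu), inv_mul_eq_div, le_div_iff₀ hc, mul_comm]
    exact hle u hu
  · refine ae_restrict_of_forall_mem measurableSet_Ioo fun u hu => ?_
    have := (sub_pos.2 hu.2).ne'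
    field_simp

theorem integrableOn_Ioo_of_integrableOn_div (hΥ : 0 < Υ)
    (hint : IntegrableOn (fun u => φ u / (Υ - u)) (Ioo (-Υ) Υ)) :
    IntegrableOn φ (Ioo (-Υ) Υ) := by
  have h2Υ : 0 < (2 * Υ)⁻¹ := by positivity
  simpa using integrableOn_div_of_mul_le (D := fun _ => 1) hint continuousOn_const h2Υ
    fun u hu => by
      rw [inv_mul_le_iff₀ (by positivity)]
      linarith [hu.1]

theorem integrableOn_pairIntegrand (hint : IntegrableOn (fun u => φ u / (Υ - u)) (Ioo (-Υ) Υ))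
    {a b : ℝ} (ha : Υ ≤ a) (hb : Υ < b) :
    IntegrableOn (fun u => φ u / ((a - u) * (b - u))) (Ioo (-Υ) Υ) :=
  integrableOn_div_of_mul_le hint (by fun_prop) (sub_pos.2 hb) fun u hu => by
    rw [mul_comm]
    exact mul_le_mul (by linarith) (by linarith [hu.2]) (sub_pos.2 hb).le (by linarith [hu.2])

theorem div_mul_le_div_div {x u a b Υ : ℝ} (hx : 0 ≤ x) (hu : u < Υ) (ha : Υ ≤ a) (hb : Υ < b) :
    x / ((a - u) * (b - u)) ≤ x / (Υ - u) / (b - Υ) := by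
  rw [div_div]
  exact div_le_div_of_nonneg_left hx (mul_pos (sub_pos.2 hu) (sub_pos.2 hb))
    (mul_le_mul (by linarith) (by linarith) (sub_pos.2 hb).le (by linarith))

theorem pairIntegral_nonneg (hpos : ∀ u, 0 ≤ φ u) {a b : ℝ} (ha : Υ ≤ a) (hb : Υ ≤ b) :
    0 ≤ pairIntegral φ Υ a b :=
  setIntegral_nonneg measurableSet_Ioo fun u hu =>
    div_nonneg (hpos u) (mul_nonneg (by linarith [hu.2]) (by linarith [hu.2]))

theorem pairIntegral_le_div (hpos : ∀ u, 0 ≤ φ u)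
    (hint : IntegrableOn (fun u => φ u / (Υ - u)) (Ioo (-Υ) Υ)) {a b : ℝ} (ha : Υ ≤ a)
    (hb : Υ < b) :
    pairIntegral φ Υ a b ≤ (∫ u in Ioo (-Υ) Υ, φ u / (Υ - u)) / (b - Υ) := by
  rw [← integral_div]
  exact setIntegral_mono_on (integrableOn_pairIntegrand hint ha hb) (hint.div_const _)
    measurableSet_Ioo fun u hu => div_mul_le_div_div (hpos u) hu.2 ha hb

theorem pairIntegral_anti (hpos : ∀ u, 0 ≤ φ u)
    (hint : IntegrableOn (fun u => φ u / (Υ - u)) (Ioo (-Υ) Υ)) {a₁ a₂ b₁ b₂ : ℝ}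
    (ha₁ : Υ ≤ a₁) (hb₁ : Υ < b₁) (ha : a₁ ≤ a₂) (hb : b₁ ≤ b₂) :
    pairIntegral φ Υ a₂ b₂ ≤ pairIntegral φ Υ a₁ b₁ :=
  setIntegral_mono_on (integrableOn_pairIntegrand hint (ha₁.trans ha) (hb₁.trans_le hb))
    (integrableOn_pairIntegrand hint ha₁ hb₁) measurableSet_Ioo fun u hu =>
      div_le_div_of_nonneg_left (hpos u) (mul_pos (by linarith [hu.2]) (by linarith [hu.2]))
        (mul_le_mul (by linarith) (by linarith) (by linarith [hu.2]) (by linarith [hu.2]))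

theorem pairIntegral_strictAnti (hΥ : 0 < Υ) (hppos : ∀ u : ℝ, |u| < Υ → 0 < φ u)
    (hint : IntegrableOn (fun u => φ u / (Υ - u)) (Ioo (-Υ) Υ)) {a₁ a₂ b₁ b₂ : ℝ}
    (ha₁ : Υ ≤ a₁) (hb₁ : Υ < b₁) (ha : a₁ < a₂) (hb : b₁ ≤ b₂) :
    pairIntegral φ Υ a₂ b₂ < pairIntegral φ Υ a₁ b₁ :=
  setIntegral_lt_setIntegral_of_forall_lt measurableSet_Ioo (by simp [hΥ])
    (integrableOn_pairIntegrand hint (ha₁.trans ha.le) (hb₁.trans_le hb))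
    (integrableOn_pairIntegrand hint ha₁ hb₁) fun u hu =>
      div_lt_div_of_pos_left (hppos u (abs_lt.2 hu))
        (mul_pos (by linarith [hu.2]) (by linarith [hu.2]))
        (mul_lt_mul (by linarith) (by linarith) (by linarith [hu.2]) (by linarith [hu.2]))

theorem continuousOn_pairIntegral (hpos : ∀ u, 0 ≤ φ u)
    (hint : IntegrableOn (fun u => φ u / (Υ - u)) (Ioo (-Υ) Υ)) {c : ℝ} (hc : 0 < c) :
    ContinuousOn (fun x : ℝ × ℝ => pairIntegral φ Υ x.1 x.2) {x | Υ ≤ x.1 ∧ Υ + c ≤ x.2} := by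
  refine continuousOn_of_dominated (bound := fun u => φ u / (Υ - u) / c)
    (fun x hx => (integrableOn_pairIntegrand hint hx.1 (by linarith [hx.2])).aestronglyMeasurable)
    (fun x hx => ae_restrict_of_forall_mem measurableSet_Ioo fun u hu => ?_)
    (hint.div_const c) (ae_restrict_of_forall_mem measurableSet_Ioo fun u hu => ?_)
  · have hΥu : 0 < Υ - u := sub_pos.2 hu.2
    rw [Real.norm_eq_abs, abs_of_nonneg
      (div_nonneg (hpos u) (mul_nonneg (by linarith [hx.1]) (by linarith [hx.2])))]
    exact (div_mul_le_div_div (hpos u) hu.2 hx.1 (by linarith [hx.2])).trans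
      (div_le_div_of_nonneg_left (div_nonneg (hpos u) hΥu.le) hc (by linarith [hx.2]))
  · refine continuousOn_const.div (by fun_prop) fun x hx => ?_
    exact (mul_pos (by linarith [hx.1, hu.2]) (by linarith [hx.2, hu.2])).ne'

end PairIntegral

section Dielectric

variable {φ : ℝ → ℝ} {Υ : ℝ}

theorem Ffun_eq_pairIntegral {r : ℝ} (hr : r ≠ 0) (τ : ℝ) :
    Ffun φ Υ r τ = 1 - 1 / (2 * r ^ 2) *
      pairIntegral φ Υ ((τ - r ^ 2) / (2 * r)) ((τ - r ^ 2) / (2 * r) + r) := by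
  rw [show (τ - r ^ 2) / (2 * r) + r = (τ + r ^ 2) / (2 * r) by field_simp; ring]
  rfl

theorem le_sub_sq_div_of_le {r τ : ℝ} (hr : 0 < r) (hτ : 2 * r * Υ + r ^ 2 ≤ τ) :
    Υ ≤ (τ - r ^ 2) / (2 * r) := by
  rw [le_div_iff₀ (by positivity)]
  linarith

theorem continuousOn_Ffun (hpos : ∀ u, 0 ≤ φ u)
    (hint : IntegrableOn (fun u => φ u / (Υ - u)) (Ioo (-Υ) Υ)) {r : ℝ} (hr : 0 < r) :
    ContinuousOn (Ffun φ Υ r) (Ici (2 * r * Υ + r ^ 2)) := by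
  have hpath : ContinuousOn (fun τ => pairIntegral φ Υ ((τ - r ^ 2) / (2 * r))
      ((τ - r ^ 2) / (2 * r) + r)) (Ici (2 * r * Υ + r ^ 2)) :=
    (continuousOn_pairIntegral hpos hint hr).comp
      (f := fun τ => ((τ - r ^ 2) / (2 * r), (τ - r ^ 2) / (2 * r) + r)) (by fun_prop) fun τ hτ =>
      ⟨le_sub_sq_div_of_le hr hτ, by linarith [le_sub_sq_div_of_le hr hτ]⟩
  exact (continuousOn_const.sub (continuousOn_const.mul hpath)).congr fun τ _ =>
    Ffun_eq_pairIntegral hr.ne' τ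

theorem strictMonoOn_Ffun (hΥ : 0 < Υ) (hppos : ∀ u : ℝ, |u| < Υ → 0 < φ u)
    (hint : IntegrableOn (fun u => φ u / (Υ - u)) (Ioo (-Υ) Υ)) {r : ℝ} (hr : 0 < r) :
    StrictMonoOn (Ffun φ Υ r) (Ici (2 * r * Υ + r ^ 2)) := by
  intro τ₁ hτ₁ τ₂ _ hτ
  have ha : (τ₁ - r ^ 2) / (2 * r) < (τ₂ - r ^ 2) / (2 * r) := by gcongr
  have hΥ₁ := le_sub_sq_div_of_le hr hτ₁
  have hJ := pairIntegral_strictAnti (b₁ := (τ₁ - r ^ 2) / (2 * r) + r)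
    (b₂ := (τ₂ - r ^ 2) / (2 * r) + r) hΥ hppos hint hΥ₁ (by linarith) ha (by linarith)
  rw [Ffun_eq_pairIntegral hr.ne', Ffun_eq_pairIntegral hr.ne']
  exact sub_lt_sub_left (mul_lt_mul_of_pos_left hJ (by positivity)) 1

theorem Ffun_threshold_eq_PhiFun {r : ℝ} (hr : 0 < r) :
    Ffun φ Υ r (2 * r * Υ + r ^ 2) = PhiFun φ Υ r := by
  rw [Ffun_eq_pairIntegral hr.ne', show (2 * r * Υ + r ^ 2 - r ^ 2) / (2 * r) = Υ by
    field_simp; ring]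
  rfl

theorem tendsto_Ffun_atTop (hpos : ∀ u, 0 ≤ φ u)
    (hint : IntegrableOn (fun u => φ u / (Υ - u)) (Ioo (-Υ) Υ)) {r : ℝ} (hr : 0 < r) :
    Tendsto (Ffun φ Υ r) atTop (𝓝 1) := by
  set a : ℝ → ℝ := fun τ => (τ - r ^ 2) / (2 * r)
  have ha : Tendsto a atTop atTop :=
    (tendsto_atTop_add_const_right _ _ tendsto_id).atTop_div_const (by positivity)
  have hbound : Tendsto (fun τ => (∫ u in Ioo (-Υ) Υ, φ u / (Υ - u)) / (a τ + r - Υ))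
      atTop (𝓝 0) :=
    tendsto_const_nhds.div_atTop (tendsto_atTop_add_const_right _ _
      (tendsto_atTop_add_const_right _ _ ha))
  have hJ : Tendsto (fun τ => pairIntegral φ Υ (a τ) (a τ + r)) atTop (𝓝 0) := by
    refine squeeze_zero' ?_ ?_ hbound <;>
      filter_upwards [ha.eventually_ge_atTop Υ] with τ hτ
    · exact pairIntegral_nonneg hpos hτ (by linarith)
    · exact pairIntegral_le_div hpos hint hτ (by linarith)
  have := (hJ.const_mul (1 / (2 * r ^ 2))).const_sub 1
  rw [mul_zero, sub_zero] at this
  exact this.congr fun τ => (Ffun_eq_pairIntegral hr.ne' τ).symm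

end Dielectric

theorem existsUnique_eq_of_strictMonoOn_Ici {α δ : Type*} [ConditionallyCompleteLinearOrder α]
    [DenselyOrdered α] [TopologicalSpace α] [OrderTopology α] [LinearOrder δ] [TopologicalSpace δ]
    [OrderClosedTopology δ] {f : α → δ} {a : α} {y c : δ} (hf : ContinuousOn f (Ici a))
    (hmono : StrictMonoOn f (Ici a)) (ha : f a ≤ y) (hlim : Tendsto f atTop (𝓝 c)) (hy : y < c) :
    ∃! x, x ∈ Ici a ∧ f x = y := by
  obtain ⟨b, hb, hab⟩ := ((hlim.eventually_const_lt hy).and (eventually_ge_atTop a)).exists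
  obtain ⟨x, hx, hfx⟩ := intermediate_value_Icc hab (hf.mono Icc_subset_Ici_self) ⟨ha, hb.le⟩
  exact ⟨x, ⟨hx.1, hfx⟩, fun z hz => hmono.injOn hz.1 hx.1 (hz.2.trans hfx.symm)⟩

theorem setIntegral_Ioo_eq_integral_of_support {φ : ℝ → ℝ} {Υ : ℝ}
    (hsupp : ∀ u : ℝ, Υ ≤ |u| → φ u = 0) :
    ∫ u in Ioo (-Υ) Υ, φ u = ∫ u, φ u :=
  setIntegral_eq_integral_of_forall_compl_eq_zero fun u hu => hsupp u <| by
    rw [mem_Ioo, not_and_or, not_lt, not_lt] at hu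
    rcases hu with hu | hu
    · exact le_abs.2 (Or.inr (by linarith))
    · exact le_abs.2 (Or.inl hu)

section SmallWavenumber

variable {φ : ℝ → ℝ} {Υ : ℝ}

theorem PhiFun_nonpos_of_le (hpos : ∀ u, 0 ≤ φ u)
    (hint : IntegrableOn (fun u => φ u / (Υ - u)) (Ioo (-Υ) Υ)) {κ₀ r : ℝ}
    (hκ₀ : PhiFun φ Υ κ₀ = 0) (hr : 0 < r) (hrκ : r ≤ κ₀) :
    PhiFun φ Υ r ≤ 0 := by
  have hκ₀pos : 0 < κ₀ := hr.trans_le hrκ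
  have hJκ : pairIntegral φ Υ Υ (Υ + κ₀) = 2 * κ₀ ^ 2 := by
    change 1 - 1 / (2 * κ₀ ^ 2) * pairIntegral φ Υ Υ (Υ + κ₀) = 0 at hκ₀
    field_simp at hκ₀
    linarith
  have hJ : pairIntegral φ Υ Υ (Υ + κ₀) ≤ pairIntegral φ Υ Υ (Υ + r) :=
    pairIntegral_anti hpos hint le_rfl (by linarith) le_rfl (by linarith)
  change 1 - 1 / (2 * r ^ 2) * pairIntegral φ Υ Υ (Υ + r) ≤ 0
  rw [sub_nonpos, one_div, inv_mul_eq_div, le_div_iff₀ (by positivity)]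
  nlinarith

theorem Ffun_eq_one_sub_half_integral {r : ℝ} (hr : r ≠ 0) (τ : ℝ) :
    Ffun φ Υ r τ = 1 - 1 / 2 * ∫ u in Ioo (-Υ) Υ, φ u / ((τ / 2 - r * u) ^ 2 - r ^ 4 / 4) := by
  have hdenom : ∀ u, (τ / 2 - r * u) ^ 2 - r ^ 4 / 4 =
      (((τ - r ^ 2) / (2 * r) - u) * ((τ + r ^ 2) / (2 * r) - u)) * r ^ 2 := fun u => by
    field_simp
    ring
  have hintegrand : ∀ u, φ u / ((τ / 2 - r * u) ^ 2 - r ^ 4 / 4) =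
      φ u / (((τ - r ^ 2) / (2 * r) - u) * ((τ + r ^ 2) / (2 * r) - u)) / r ^ 2 := fun u => by
    rw [hdenom, div_div]
  simp_rw [hintegrand]
  rw [integral_div]
  unfold Ffun
  ring

theorem integral_eq_two_of_Ffun_eq_zero {r τ : ℝ} (hr : r ≠ 0) (hτ : Ffun φ Υ r τ = 0) :
    ∫ u in Ioo (-Υ) Υ, φ u / ((τ / 2 - r * u) ^ 2 - r ^ 4 / 4) = 2 := by
  rw [Ffun_eq_one_sub_half_integral hr] at hτ
  linarith

theorem sq_div_le_sub_sq_sub_pow_four_div {τ r u : ℝ} (hr : 0 ≤ r) (hu : u ∈ Ioo (-Υ) Υ)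
    (hrΥ : r * Υ ≤ τ / 4) (hr2 : r ^ 2 ≤ τ / 4) :
    τ ^ 2 / 64 ≤ (τ / 2 - r * u) ^ 2 - r ^ 4 / 4 := by
  have hru : r * u ≤ r * Υ := mul_le_mul_of_nonneg_left hu.2.le hr
  have hru' : r * -Υ ≤ r * u := mul_le_mul_of_nonneg_left hu.1.le hr
  have h₁ : τ / 8 ≤ τ / 2 - r * u - r ^ 2 / 2 := by linarith
  have h₂ : τ / 8 ≤ τ / 2 - r * u + r ^ 2 / 2 := by nlinarith
  calc τ ^ 2 / 64 = (τ / 8) * (τ / 8) := by ring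
    _ ≤ (τ / 2 - r * u - r ^ 2 / 2) * (τ / 2 - r * u + r ^ 2 / 2) :=
      mul_le_mul h₁ h₂ (by nlinarith) (by linarith)
    _ = (τ / 2 - r * u) ^ 2 - r ^ 4 / 4 := by ring

theorem tendsto_Ffun_nhdsGT_zero (hΥ : 0 < Υ) (hpos : ∀ u, 0 ≤ φ u)
    (hint : IntegrableOn (fun u => φ u / (Υ - u)) (Ioo (-Υ) Υ)) {τ : ℝ} (hτ : 0 < τ) :
    Tendsto (fun r => Ffun φ Υ r τ) (𝓝[>] 0)
      (𝓝 (1 - 2 * (∫ u in Ioo (-Υ) Υ, φ u) / τ ^ 2)) := by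
  have hφ := integrableOn_Ioo_of_integrableOn_div hΥ hint
  have hτ4 : (0 : ℝ) < τ / 4 := by positivity
  have hsmall : ∀ᶠ r in 𝓝[>] (0 : ℝ), 0 < r ∧ r * Υ < τ / 4 ∧ r ^ 2 < τ / 4 :=
    eventually_mem_nhdsWithin.and <| nhdsWithin_le_nhds <|
      (ContinuousAt.eventually_lt (by fun_prop) continuousAt_const (by simpa using hτ4)).and
      (ContinuousAt.eventually_lt (by fun_prop) continuousAt_const (by simpa using hτ4))
  have hden : ∀ᶠ r in 𝓝[>] (0 : ℝ), ∀ u ∈ Ioo (-Υ) Υ,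
      τ ^ 2 / 64 ≤ (τ / 2 - r * u) ^ 2 - r ^ 4 / 4 :=
    hsmall.mono fun r hr u hu => sq_div_le_sub_sq_sub_pow_four_div hr.1.le hu hr.2.1.le hr.2.2.le
  have hlim : Tendsto (fun r => ∫ u in Ioo (-Υ) Υ, φ u / ((τ / 2 - r * u) ^ 2 - r ^ 4 / 4))
      (𝓝[>] 0) (𝓝 (∫ u in Ioo (-Υ) Υ, φ u / (τ / 2) ^ 2)) := by
    refine tendsto_integral_filter_of_dominated_convergence (fun u => φ u / (τ ^ 2 / 64))
      (Eventually.of_forall fun r => hφ.aestronglyMeasurable.div₀ (by fun_prop))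
      (hden.mono fun r hr => ae_restrict_of_forall_mem measurableSet_Ioo fun u hu => ?_)
      (hφ.div_const _) (ae_of_all _ fun u => ?_)
    · have hD := (by positivity : (0 : ℝ) < τ ^ 2 / 64).trans_le (hr u hu)
      rw [Real.norm_eq_abs, abs_of_nonneg (div_nonneg (hpos u) hD.le)]
      exact div_le_div_of_nonneg_left (hpos u) (by positivity) (hr u hu)
    · have hD : Tendsto (fun r : ℝ => (τ / 2 - r * u) ^ 2 - r ^ 4 / 4) (𝓝[>] 0)
          (𝓝 ((τ / 2) ^ 2)) :=
        tendsto_nhdsWithin_of_tendsto_nhds (by simpa using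
          (show Continuous fun r : ℝ => (τ / 2 - r * u) ^ 2 - r ^ 4 / 4 by fun_prop).tendsto 0)
      exact tendsto_const_nhds.div hD (by positivity)
  have hF : (fun r => Ffun φ Υ r τ) =ᶠ[𝓝[>] 0]
      fun r => 1 - 1 / 2 * ∫ u in Ioo (-Υ) Υ, φ u / ((τ / 2 - r * u) ^ 2 - r ^ 4 / 4) :=
    hsmall.mono fun r hr => Ffun_eq_one_sub_half_integral hr.1.ne' τ
  rw [tendsto_congr' hF]
  convert (hlim.const_mul (1 / 2)).const_sub 1 using 2
  rw [integral_div]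
  field_simp

theorem tendsto_sqrt_of_eventually_Ffun_eq_zero (hΥ : 0 < Υ) (hpos : ∀ u, 0 ≤ φ u)
    (hppos : ∀ u : ℝ, |u| < Υ → 0 < φ u)
    (hint : IntegrableOn (fun u => φ u / (Υ - u)) (Ioo (-Υ) Υ)) {τstar : ℝ → ℝ}
    (hτ : ∀ᶠ r in 𝓝[>] 0, 2 * r * Υ + r ^ 2 ≤ τstar r ∧ Ffun φ Υ r (τstar r) = 0) :
    Tendsto τstar (𝓝[>] 0) (𝓝 (√(2 * ∫ u in Ioo (-Υ) Υ, φ u))) := by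
  set ρ := ∫ u in Ioo (-Υ) Υ, φ u
  have hthreshold : ∀ a : ℝ, 0 < a → ∀ᶠ r in 𝓝[>] (0 : ℝ), 0 < r ∧ 2 * r * Υ + r ^ 2 ≤ a :=
    fun a ha => eventually_mem_nhdsWithin.and <| nhdsWithin_le_nhds <|
      (ContinuousAt.eventually_lt (by fun_prop) continuousAt_const (by simpa using ha)).mono
        fun _ => le_of_lt
  refine tendsto_order.2 ⟨fun a ha => ?_, fun b hb => ?_⟩
  · rcases le_or_gt a 0 with ha0 | ha0
    · filter_upwards [hτ, hthreshold 1 one_pos] with r ⟨hle, _⟩ ⟨hr, _⟩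
      nlinarith
    · have hFa : 1 - 2 * ρ / a ^ 2 < 0 := by
        rw [Real.lt_sqrt ha0.le] at ha
        rw [sub_neg, one_lt_div (by positivity)]
        exact ha
      filter_upwards [hτ, hthreshold a ha0,
        (tendsto_Ffun_nhdsGT_zero hΥ hpos hint ha0).eventually_lt_const hFa]
        with r ⟨hle, hzero⟩ ⟨hr, hra⟩ hFr
      by_contra! h
      have := (strictMonoOn_Ffun hΥ hppos hint hr).monotoneOn hle hra h
      linarith
  · have hb0 : 0 < b := (Real.sqrt_nonneg _).trans_lt hb
    have hFb : 0 < 1 - 2 * ρ / b ^ 2 := by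
      rw [gt_iff_lt, Real.sqrt_lt' hb0] at hb
      rw [sub_pos, div_lt_one (by positivity)]
      exact hb
    filter_upwards [hτ, hthreshold b hb0,
      (tendsto_Ffun_nhdsGT_zero hΥ hpos hint hb0).eventually_const_lt hFb]
      with r ⟨hle, hzero⟩ ⟨hr, hrb⟩ hFr
    by_contra! h
    have := (strictMonoOn_Ffun hΥ hppos hint hr).monotoneOn hrb hle h
    linarith

end SmallWavenumber

theorem stmt12_general (Υ : ℝ) (hΥ : 0 < Υ) (φ : ℝ → ℝ)
    (hpos : ∀ u : ℝ, 0 ≤ φ u)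
    (hppos : ∀ u : ℝ, |u| < Υ → 0 < φ u)
    (hsupp : ∀ u : ℝ, Υ ≤ |u| → φ u = 0)
    (hint : IntegrableOn (fun u : ℝ => φ u / (Υ - u)) (Set.Ioo (-Υ) Υ))
    (κ₀ : ℝ) (hκ₀pos : 0 < κ₀) (hκ₀ : PhiFun φ Υ κ₀ = 0) :
    (∀ r : ℝ, 0 < r → r ≤ κ₀ →
      ContinuousOn (Ffun φ Υ r) (Set.Ici (2 * r * Υ + r ^ 2)) ∧
      StrictMonoOn (Ffun φ Υ r) (Set.Ici (2 * r * Υ + r ^ 2)) ∧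
      Ffun φ Υ r (2 * r * Υ + r ^ 2) = PhiFun φ Υ r ∧
      PhiFun φ Υ r ≤ 0 ∧
      Filter.Tendsto (Ffun φ Υ r) Filter.atTop (nhds 1) ∧
      (∃! τ : ℝ, τ ∈ Set.Ici (2 * r * Υ + r ^ 2) ∧ Ffun φ Υ r τ = 0)) ∧
    ∃ τstar : ℝ → ℝ,
      (∀ r : ℝ, 0 < r → r ≤ κ₀ →
        2 * r * Υ + r ^ 2 ≤ τstar r ∧ Ffun φ Υ r (τstar r) = 0 ∧
        (∫ u in Set.Ioo (-Υ) Υ,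
          φ u / ((τstar r / 2 - r * u) ^ 2 - r ^ 4 / 4)) = 2) ∧
      τstar κ₀ = 2 * κ₀ * Υ + κ₀ ^ 2 ∧
      Filter.Tendsto τstar (nhdsWithin 0 (Set.Ioi 0))
        (nhds (Real.sqrt (2 * ∫ u : ℝ, φ u))) := by
  have hzero : ∀ r : ℝ, 0 < r → r ≤ κ₀ →
      ∃! τ : ℝ, τ ∈ Ici (2 * r * Υ + r ^ 2) ∧ Ffun φ Υ r τ = 0 := fun r hr hrκ =>
    existsUnique_eq_of_strictMonoOn_Ici (continuousOn_Ffun hpos hint hr)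
      (strictMonoOn_Ffun hΥ hppos hint hr)
      ((Ffun_threshold_eq_PhiFun hr).trans_le (PhiFun_nonpos_of_le hpos hint hκ₀ hr hrκ))
      (tendsto_Ffun_atTop hpos hint hr) one_pos
  refine ⟨fun r hr hrκ => ⟨continuousOn_Ffun hpos hint hr, strictMonoOn_Ffun hΥ hppos hint hr,
    Ffun_threshold_eq_PhiFun hr, PhiFun_nonpos_of_le hpos hint hκ₀ hr hrκ,
    tendsto_Ffun_atTop hpos hint hr, hzero r hr hrκ⟩, ?_⟩
  choose! τstar hτstar using fun r (hr : 0 < r) (hrκ : r ≤ κ₀) => (hzero r hr hrκ).exists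
  refine ⟨τstar, fun r hr hrκ => ⟨(hτstar r hr hrκ).1, (hτstar r hr hrκ).2,
    integral_eq_two_of_Ffun_eq_zero hr.ne' (hτstar r hr hrκ).2⟩, ?_, ?_⟩
  · exact (hzero κ₀ hκ₀pos le_rfl).unique (hτstar κ₀ hκ₀pos le_rfl)
      ⟨self_mem_Ici, (Ffun_threshold_eq_PhiFun hκ₀pos).trans hκ₀⟩
  · rw [← setIntegral_Ioo_eq_integral_of_support hsupp]
    exact tendsto_sqrt_of_eventually_Ffun_eq_zero hΥ hpos hppos hint <|
      mem_of_superset (Ioc_mem_nhdsGT hκ₀pos) fun r hr => hτstar r hr.1 hr.2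

theorem stmt12 (Υ : ℝ) (hΥ : 0 < Υ) (φ : ℝ → ℝ)
    (hpos : ∀ u : ℝ, 0 ≤ φ u)
    (heven : ∀ u : ℝ, φ (-u) = φ u)
    (hcont : Continuous φ)
    (hppos : ∀ u : ℝ, |u| < Υ → 0 < φ u)
    (hsupp : ∀ u : ℝ, Υ ≤ |u| → φ u = 0)
    (hint : IntegrableOn (fun u : ℝ => φ u / (Υ - u)) (Set.Ioo (-Υ) Υ))
    (κ₀ : ℝ) (hκ₀pos : 0 < κ₀) (hκ₀ : PhiFun φ Υ κ₀ = 0)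
    (hκ₀uniq : ∀ κ : ℝ, 0 < κ → PhiFun φ Υ κ = 0 → κ = κ₀) :
    (∀ r : ℝ, 0 < r → r ≤ κ₀ →
      ContinuousOn (Ffun φ Υ r) (Set.Ici (2 * r * Υ + r ^ 2)) ∧
      StrictMonoOn (Ffun φ Υ r) (Set.Ici (2 * r * Υ + r ^ 2)) ∧
      Ffun φ Υ r (2 * r * Υ + r ^ 2) = PhiFun φ Υ r ∧
      PhiFun φ Υ r ≤ 0 ∧
      Filter.Tendsto (Ffun φ Υ r) Filter.atTop (nhds 1) ∧
      (∃! τ : ℝ, τ ∈ Set.Ici (2 * r * Υ + r ^ 2) ∧ Ffun φ Υ r τ = 0)) ∧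
    ∃ τstar : ℝ → ℝ,
      (∀ r : ℝ, 0 < r → r ≤ κ₀ →
        2 * r * Υ + r ^ 2 ≤ τstar r ∧ Ffun φ Υ r (τstar r) = 0 ∧
        (∫ u in Set.Ioo (-Υ) Υ,
          φ u / ((τstar r / 2 - r * u) ^ 2 - r ^ 4 / 4)) = 2) ∧
      τstar κ₀ = 2 * κ₀ * Υ + κ₀ ^ 2 ∧
      Filter.Tendsto τstar (nhdsWithin 0 (Set.Ioi 0))
        (nhds (Real.sqrt (2 * ∫ u : ℝ, φ u))) :=
  stmt12_general Υ hΥ φ hpos hppos hsupp hint κ₀ hκ₀pos hκ₀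
end
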